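/- arXiv:2409.16141 — 7 statements merged into one kernel-verified Lean document; each statement's English description precedes it below -/
import Mathlib

section
/- For every m-ary function f : T^n → T, the sensitivity satisfies s(f) ≤ 2·(m-1)^3·deg(f)^2. -/
open scoped Classical

noncomputable section

/-- `F` represents the `m`-ary function `f : T^n → T` if it agrees with `f` on `T^n`. -/
def Represents (T : Finset ℂ) (n : ℕ) (F : MvPolynomial (Fin n) ℂ)
    (f : (Fin n → ↥T) → ↥T) : Prop :=
  ∀ x : Fin n → ↥T, MvPolynomial.eval (fun i => (x i : ℂ)) F = (f x : ℂ)

/-- The degree of an `m`-ary function: the minimum total degree of a representing polynomial. -/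
def degreeF (T : Finset ℂ) (n : ℕ) (f : (Fin n → ↥T) → ↥T) : ℕ :=
  sInf {d | ∃ F : MvPolynomial (Fin n) ℂ, Represents T n F f ∧ F.totalDegree = d}

/-- Local sensitivity of `f` at `x`: the number of `y` differing from `x` in exactly one
entry with `f y ≠ f x`. -/
def localSens (T : Finset ℂ) (n : ℕ) (f : (Fin n → ↥T) → ↥T) (x : Fin n → ↥T) : ℕ :=
  (Finset.univ.filter fun y : Fin n → ↥T => hammingDist x y = 1 ∧ f y ≠ f x).card

/-- Sensitivity of `f`. -/
def sens (T : Finset ℂ) (n : ℕ) (f : (Fin n → ↥T) → ↥T) : ℕ :=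
  Finset.univ.sup (localSens T n f)


/-!
Fix `x` and let `S` be the set of coordinates in which `f` is sensitive at `x`; the local
sensitivity at `x` is at most `(m - 1) |S|`. Composing a representing polynomial of degree `d`
with the Lagrange interpolant on `T` that is `1` at `f x` and `-1` elsewhere gives a polynomial of
degree `D ≤ (m - 1) d` with values `±1` on `T^n`, equal to `1` at `x` and to `-1` at a chosen
neighbour of `x` in each sensitive direction. Restricted to the cube spanned by these neighbours
and averaged over the layers of the cube (Minsky–Papert symmetrization), it becomes a univariate
polynomial `q` of degree `≤ D` with `q 0 = 1`, `q 1 = -1` and `|q k| ≤ 1` for `k ≤ |S|`.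

Such a `q` forces `|S| ≤ 2 D²`: otherwise the nodes `2 j² + 1`, `j ≤ D`, lie in `[0, |S|]`, and
Lagrange interpolation at them gives `q 0 = ∑ λⱼ q (2 j² + 1)` with weights satisfying
`|λⱼ| ≤ 2 λ₀ / (2 j² + 1)` for `j ≥ 1` and `λ₀ = ∏ (1 + 1 / (2 j²)) < e`. Hence
`1 + λ₀ ≤ 2 λ₀ ∑ 1 / (2 j² + 1) ≤ 4 λ₀ / 3`, i.e. `λ₀ ≥ 3`, a contradiction.
-/

open Finset Polynomial
open scoped Nat

theorem Polynomial.eval_eq_sum_mul_prod_div {K ι : Type*} [Field K] [DecidableEq ι]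
    {s : Finset ι} {v : ι → K} (hv : Set.InjOn v s) {p : K[X]} (hp : p.degree < #s) (x : K) :
    p.eval x = ∑ j ∈ s, p.eval (v j) * ∏ i ∈ s.erase j, (x - v i) / (v j - v i) := by
  conv_lhs => rw [Lagrange.eq_interpolate hv hp]
  simp only [Lagrange.interpolate_apply, Lagrange.basis, Lagrange.basisDivisor, eval_finsetSum,
    eval_mul, eval_C, eval_prod, eval_sub, eval_X, div_eq_inv_mul]

theorem Finset.prod_erase_range_add_one_of_le {M : Type*} [CommMonoid M] (g : ℕ → M)
    {j D : ℕ} (hj : j ≤ D) :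
    ∏ i ∈ (range (D + 1 + 1)).erase j, g i = (∏ i ∈ (range (D + 1)).erase j, g i) * g (D + 1) := by
  rw [range_add_one, erase_insert_of_ne (by omega), prod_insert (by simp), mul_comm]

theorem Finset.prod_range_add_one_erase_zero {M : Type*} [CommMonoid M] (g : ℕ → M) (D : ℕ) :
    ∏ i ∈ (range (D + 1)).erase 0, g i = ∏ i ∈ range D, g (i + 1) := by
  rw [range_add_one', erase_insert (by simp), prod_map]
  rfl

theorem Nat.two_mul_factorial_mul_ascFactorial_self {j : ℕ} (hj : 1 ≤ j) :
    2 * (j ! * j.ascFactorial j) = (2 * j)! := by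
  obtain ⟨l, rfl⟩ := Nat.exists_eq_add_of_le' hj
  have h := Nat.factorial_mul_ascFactorial l (l + 1)
  rw [show 2 * (l + 1) = l + (l + 1) + 1 by ring, Nat.factorial_succ (l + (l + 1)), ← h,
    Nat.factorial_succ l]
  ring

theorem Nat.factorial_add_sq_le (j r : ℕ) : (j + r)! ^ 2 ≤ r ! * (2 * j + r)! := by
  induction j with
  | zero => simp [sq]
  | succ j ih =>
    rw [show j + 1 + r = j + r + 1 by ring, show 2 * (j + 1) + r = 2 * j + r + 1 + 1 by ring,
      Nat.factorial_succ, Nat.factorial_succ (2 * j + r + 1), Nat.factorial_succ (2 * j + r)]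
    calc ((j + r + 1) * (j + r)!) ^ 2 = (j + r + 1) ^ 2 * (j + r)! ^ 2 := by ring
      _ ≤ ((2 * j + r + 1 + 1) * (2 * j + r + 1)) * (r ! * (2 * j + r)!) := by
        gcongr
        nlinarith
      _ = _ := by ring

theorem MvPolynomial.totalDegree_bind₁_le {R σ τ : Type*} [CommSemiring R]
    {f : σ → MvPolynomial τ R} (hf : ∀ i, (f i).totalDegree ≤ 1) (P : MvPolynomial σ R) :
    (bind₁ f P).totalDegree ≤ P.totalDegree := by
  conv_lhs => rw [P.as_sum]
  rw [map_sum]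
  refine totalDegree_finsetSum_le fun d hd => ?_
  rw [bind₁_monomial]
  calc _ ≤ (C (coeff d P)).totalDegree + (∏ i ∈ d.support, f i ^ d i).totalDegree :=
        totalDegree_mul _ _
    _ ≤ 0 + ∑ i ∈ d.support, d i := by
        gcongr
        · rw [totalDegree_C]
        · refine (totalDegree_finsetProd _ _).trans (sum_le_sum fun i _ => ?_)
          exact (totalDegree_pow _ _).trans (by simpa using Nat.mul_le_mul_left (d i) (hf i))
    _ ≤ P.totalDegree := by rw [zero_add]; exact le_totalDegree hd

lemma Finsupp.card_support_le_sum {σ : Type*} (d : σ →₀ ℕ) :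
    #d.support ≤ d.sum fun _ e => e := by
  simpa [Finsupp.sum] using card_nsmul_le_sum d.support (fun i => d i) 1
    fun i hi => Nat.one_le_iff_ne_zero.2 (Finsupp.mem_support_iff.1 hi)

theorem MvPolynomial.eval_piecewise_one_zero {R σ : Type*} [CommSemiring R] [DecidableEq σ]
    (A : Finset σ) (P : MvPolynomial σ R) :
    eval (A.piecewise 1 0) P = ∑ d ∈ P.support with d.support ⊆ A, coeff d P := by
  rw [eval_eq, sum_filter]
  refine sum_congr rfl fun d _ => ?_
  split_ifs with hA
  · rw [prod_eq_one fun i hi => by rw [piecewise_eq_of_mem _ _ _ (hA hi), Pi.one_apply, one_pow],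
      mul_one]
  · obtain ⟨i, hi, hiA⟩ := not_subset.1 hA
    rw [prod_eq_zero hi (by rw [piecewise_eq_of_notMem _ _ _ hiA, Pi.zero_apply,
      zero_pow (Finsupp.mem_support_iff.1 hi)]), mul_zero]

lemma Finset.choose_mul_descFactorial_eq_card_supersets_mul {α : Type*} [DecidableEq α]
    {B S : Finset α} (hB : B ⊆ S) (k : ℕ) :
    (#S).choose k * k.descFactorial #B
      = #{A ∈ S.powersetCard k | B ⊆ A} * ((#S).choose #B * (#B)!) := by
  by_cases hBk : #B ≤ k
  · rw [card_filter_powersetCard_subset B S k hB hBk, Nat.descFactorial_eq_factorial_mul_choose,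
      mul_left_comm, Nat.choose_mul hBk]
    ring
  · have hempty : #{A ∈ S.powersetCard k | B ⊆ A} = 0 := card_eq_zero.2 <|
      filter_false_of_mem fun A hA hBA =>
        hBk <| (card_le_card hBA).trans (mem_powersetCard.1 hA).2.le
    rw [Nat.descFactorial_eq_zero_iff_lt.2 (by omega), hempty, zero_mul, mul_zero]

theorem MvPolynomial.exists_natDegree_le_choose_mul_eval_eq_sum {K σ : Type*} [Field K]
    [CharZero K] [DecidableEq σ] (P : MvPolynomial σ K) (S : Finset σ) :
    ∃ p : K[X], p.natDegree ≤ P.totalDegree ∧ ∀ k ≤ #S,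
      ((#S).choose k : K) * p.eval (k : K)
        = ∑ A ∈ S.powersetCard k, eval (A.piecewise 1 0) P := by
  refine ⟨∑ d ∈ P.support with d.support ⊆ S,
    Polynomial.C (coeff d P / ((#S).choose #d.support * (#d.support)! : ℕ)) *
      descPochhammer K #d.support, ?_, fun k hk => ?_⟩
  · refine natDegree_sum_le_of_forall_le _ _ fun d hd => (natDegree_C_mul_le _ _).trans ?_
    rw [descPochhammer_natDegree]
    exact (Finsupp.card_support_le_sum d).trans (le_totalDegree (mem_filter.1 hd).1)
  simp_rw [eval_piecewise_one_zero]
  rw [sum_comm' (t' := {d ∈ P.support | d.support ⊆ S})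
    (s' := fun d => {A ∈ S.powersetCard k | d.support ⊆ A}) fun A d => by
      simp only [mem_filter, mem_powersetCard]
      exact ⟨fun ⟨⟨hAS, hAk⟩, hd, hdA⟩ => ⟨⟨⟨hAS, hAk⟩, hdA⟩, hd, hdA.trans hAS⟩,
        fun ⟨⟨hA, hdA⟩, hd, _⟩ => ⟨hA, hd, hdA⟩⟩]
  rw [eval_finsetSum, mul_sum]
  refine sum_congr rfl fun d hd => ?_
  have hcard := choose_mul_descFactorial_eq_card_supersets_mul (mem_filter.1 hd).2 k
  have hne : (((#S).choose #d.support * (#d.support)! : ℕ) : K) ≠ 0 := by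
    exact_mod_cast (Nat.mul_pos (Nat.choose_pos (card_le_card (mem_filter.1 hd).2))
      (Nat.factorial_pos _)).ne'
  rw [sum_const, nsmul_eq_mul, Polynomial.eval_mul, Polynomial.eval_C,
    descPochhammer_eval_eq_descFactorial]
  field_simp
  rw [mul_right_comm, ← Nat.cast_mul, hcard]
  push_cast
  ring

theorem MvPolynomial.exists_natDegree_le_choose_mul_eval_piecewise_eq_sum {K σ : Type*} [Field K]
    [CharZero K] [DecidableEq σ] (P : MvPolynomial σ K) (u v : σ → K) (S : Finset σ) :
    ∃ p : K[X], p.natDegree ≤ P.totalDegree ∧ ∀ k ≤ #S,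
      ((#S).choose k : K) * p.eval (k : K)
        = ∑ A ∈ S.powersetCard k, eval (A.piecewise u v) P := by
  set g : σ → MvPolynomial σ K := fun i => C (v i) + C (u i - v i) * X i
  have hg : ∀ i, (g i).totalDegree ≤ 1 := fun i =>
    (totalDegree_add _ _).trans <| max_le (by rw [totalDegree_C]; exact zero_le_one) <|
      (totalDegree_mul _ _).trans (by rw [totalDegree_C, totalDegree_X, zero_add])
  obtain ⟨p, hp, hpk⟩ := exists_natDegree_le_choose_mul_eval_eq_sum (bind₁ g P) S
  refine ⟨p, hp.trans (totalDegree_bind₁_le hg P),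
    fun k hk => (hpk k hk).trans (sum_congr rfl fun A _ => ?_)⟩
  change aeval (A.piecewise 1 0) (bind₁ g P) = aeval (A.piecewise u v) P
  rw [aeval_bind₁]
  congr 2
  funext i
  by_cases hi : i ∈ A <;> simp [g, hi]

theorem MvPolynomial.eval_polynomial_aeval {R σ : Type*} [CommRing R] (x : σ → R)
    (F : MvPolynomial σ R) (p : R[X]) :
    eval x (Polynomial.aeval F p) = p.eval (eval x F) := by
  change aeval x (Polynomial.aeval F p) = _
  rw [← Polynomial.aeval_algHom_apply, Polynomial.coe_aeval_eq_eval]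
  rfl

theorem MvPolynomial.totalDegree_polynomial_aeval_le {R σ : Type*} [CommRing R]
    (F : MvPolynomial σ R) (p : R[X]) :
    (Polynomial.aeval F p).totalDegree ≤ p.natDegree * F.totalDegree := by
  rw [Polynomial.aeval_eq_sum_range]
  refine totalDegree_finsetSum_le fun i hi => (totalDegree_smul_le _ _).trans <|
    (totalDegree_pow _ _).trans (Nat.mul_le_mul_right _ (Nat.lt_succ_iff.1 (mem_range.1 hi)))

theorem exists_eq_update_of_hammingDist_eq_one {ι : Type*} [Fintype ι] [DecidableEq ι]
    {β : ι → Type*} [∀ i, DecidableEq (β i)] {x y : ∀ i, β i} (h : hammingDist x y = 1) :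
    ∃ i, y i ≠ x i ∧ y = Function.update x i (y i) := by
  obtain ⟨i, hi⟩ := card_eq_one.1 h
  have hdiff : ∀ j, x j ≠ y j ↔ j = i := fun j => by
    simpa using congrArg (j ∈ ·) hi
  refine ⟨i, ((hdiff i).2 rfl).symm, funext fun j => ?_⟩
  by_cases hj : j = i
  · subst hj; simp
  · rw [Function.update_of_ne hj]
    exact (not_not.1 (mt (hdiff j).1 hj)).symm

namespace Sensitivity

def node (j : ℕ) : ℕ := 2 * j ^ 2 + 1

lemma node_strictMono : StrictMono node := fun i j h => by
  unfold node; have := Nat.pow_lt_pow_left h two_ne_zero; omega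

lemma natCast_node_sub_node (i j : ℕ) : (node i : ℝ) - node j = 2 * ((i : ℝ) ^ 2 - j ^ 2) := by
  push_cast [node]; ring

lemma node_pos (j : ℕ) : (0 : ℝ) < node j := by
  unfold node; positivity

/-- The value at `0` of the `j`-th Lagrange basis polynomial for the nodes `node 0, …, node D`. -/
def lagrangeWeight (D j : ℕ) : ℝ :=
  ∏ i ∈ (range (D + 1)).erase j, (node i : ℝ) / (node i - node j)

lemma prod_erase_zero_abs_sq_sub (D : ℕ) :
    ∏ i ∈ (range (D + 1)).erase 0, |(i : ℝ) ^ 2 - (0 : ℕ) ^ 2| = (D ! : ℝ) ^ 2 := by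
  rw [Finset.prod_range_add_one_erase_zero, ← prod_range_add_one_eq_factorial]
  push_cast
  rw [← prod_pow]
  exact prod_congr rfl fun i _ => by
    rw [zero_pow two_ne_zero, sub_zero, abs_of_nonneg (by positivity)]

lemma two_mul_prod_erase_abs_sq_sub {j : ℕ} (hj : 1 ≤ j) (r : ℕ) :
    2 * ∏ i ∈ (range (j + r + 1)).erase j, |(i : ℝ) ^ 2 - j ^ 2| = r ! * (2 * j + r)! := by
  induction r with
  | zero =>
    have hdesc : ∏ i ∈ range j, (j - i) = j ! := by
      rw [← Nat.descFactorial_eq_prod_range, Nat.descFactorial_self]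
    rw [add_zero, range_add_one, erase_insert (by simp), Nat.factorial_zero, Nat.cast_one,
      one_mul, add_zero, ← Nat.two_mul_factorial_mul_ascFactorial_self hj, ← hdesc,
      Nat.ascFactorial_eq_prod_range, ← prod_mul_distrib]
    push_cast
    refine congrArg _ (prod_congr rfl fun i hi => ?_)
    have hij : i ≤ j := (mem_range.1 hi).le
    rw [abs_of_nonpos (by nlinarith [(Nat.cast_le (α := ℝ)).2 hij]), Nat.cast_sub hij]
    ring
  | succ r ih =>
    have hpos : (0 : ℝ) ≤ ((j + r + 1 : ℕ) : ℝ) ^ 2 - j ^ 2 := by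
      push_cast; nlinarith [(Nat.cast_nonneg j : (0 : ℝ) ≤ j), (Nat.cast_nonneg r : (0 : ℝ) ≤ r)]
    rw [← add_assoc, Finset.prod_erase_range_add_one_of_le _ (by omega), ← mul_assoc, ih,
      abs_of_nonneg hpos, Nat.factorial_succ, ← add_assoc, Nat.factorial_succ]
    push_cast
    ring

lemma prod_erase_zero_le_two_mul_prod_erase {D j : ℕ} (hj : 1 ≤ j) (hjD : j ≤ D) :
    ∏ i ∈ (range (D + 1)).erase 0, |(i : ℝ) ^ 2 - (0 : ℕ) ^ 2|
      ≤ 2 * ∏ i ∈ (range (D + 1)).erase j, |(i : ℝ) ^ 2 - j ^ 2| := by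
  obtain ⟨r, rfl⟩ := Nat.exists_eq_add_of_le hjD
  rw [prod_erase_zero_abs_sq_sub, two_mul_prod_erase_abs_sq_sub hj]
  exact_mod_cast Nat.factorial_add_sq_le j r

lemma abs_lagrangeWeight_mul_node_mul {D j : ℕ} (hj : j ≤ D) :
    |lagrangeWeight D j| * node j *
        (2 ^ D * ∏ i ∈ (range (D + 1)).erase j, |(i : ℝ) ^ 2 - j ^ 2|)
      = ∏ i ∈ range (D + 1), (node i : ℝ) := by
  have hmem : j ∈ range (D + 1) := mem_range.2 (by omega)
  have h2 : (2 : ℝ) ^ D = ∏ i ∈ (range (D + 1)).erase j, |(2 : ℝ)| := by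
    rw [prod_const, card_erase_of_mem hmem, card_range, abs_two, Nat.add_sub_cancel]
  rw [← mul_prod_erase _ _ hmem, h2, ← prod_mul_distrib, lagrangeWeight, abs_prod,
    mul_comm _ (node j : ℝ), mul_assoc, ← prod_mul_distrib]
  congr 1
  refine prod_congr rfl fun i hi => ?_
  have hne : (node i : ℝ) - node j ≠ 0 :=
    sub_ne_zero.2 (by exact_mod_cast node_strictMono.injective.ne (ne_of_mem_erase hi))
  rw [abs_div, abs_of_pos (node_pos i), ← abs_mul, ← natCast_node_sub_node,
    div_mul_cancel₀ _ (abs_ne_zero.2 hne)]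

lemma abs_lagrangeWeight_mul_node_le {D j : ℕ} (hj : 1 ≤ j) (hjD : j ≤ D) :
    |lagrangeWeight D j| * node j ≤ 2 * |lagrangeWeight D 0| := by
  have hG : 0 < (2 : ℝ) ^ D * ∏ i ∈ (range (D + 1)).erase j, |(i : ℝ) ^ 2 - j ^ 2| := by
    refine mul_pos (by positivity) (prod_pos fun i hi => abs_pos.2 (sub_ne_zero.2 ?_))
    exact_mod_cast (Nat.pow_left_injective two_ne_zero).ne (ne_of_mem_erase hi)
  rw [← mul_le_mul_iff_of_pos_right hG, abs_lagrangeWeight_mul_node_mul hjD,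
    ← abs_lagrangeWeight_mul_node_mul (Nat.zero_le D)]
  have h0 : (node 0 : ℝ) = 1 := by norm_num [node]
  calc _ ≤ |lagrangeWeight D 0| * 1 * (2 ^ D *
        (2 * ∏ i ∈ (range (D + 1)).erase j, |(i : ℝ) ^ 2 - j ^ 2|)) := by
        rw [h0]; gcongr; exact prod_erase_zero_le_two_mul_prod_erase hj hjD
    _ = _ := by ring

lemma lagrangeWeight_zero_eq (D : ℕ) :
    lagrangeWeight D 0 = ∏ i ∈ range D, (1 + 1 / (2 * ((i : ℝ) + 1) ^ 2)) := by
  rw [lagrangeWeight, Finset.prod_range_add_one_erase_zero]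
  refine prod_congr rfl fun i _ => ?_
  push_cast [node]
  field_simp
  ring

lemma sum_range_inv_two_mul_sq_le (D : ℕ) : ∑ i ∈ range D, 1 / (2 * ((i : ℝ) + 1) ^ 2) ≤ 1 :=
  calc _ ≤ ∑ i ∈ range D, (1 / (2 * (i : ℝ) + 1) - 1 / (2 * ((i + 1 : ℕ) : ℝ) + 1)) :=
        sum_le_sum fun i _ => by
          push_cast
          rw [div_sub_div _ _ (by positivity) (by positivity),
            div_le_div_iff₀ (by positivity) (by positivity)]
          nlinarith
    _ = 1 - 1 / (2 * (D : ℝ) + 1) := by rw [sum_range_sub']; simp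
    _ ≤ 1 := sub_le_self _ (by positivity)

lemma sum_range_inv_node_le (D : ℕ) : ∑ i ∈ range D, 1 / (node (i + 1) : ℝ) ≤ 2 / 3 :=
  calc _ ≤ ∑ i ∈ range D, (2 / 3 / ((i : ℝ) + 1) - 2 / 3 / (((i + 1 : ℕ) : ℝ) + 1)) :=
        sum_le_sum fun i _ => by
          have hi : (0 : ℝ) ≤ i * (i - 1) := by
            rcases Nat.eq_zero_or_pos i with rfl | hi
            · simp
            · have : (1 : ℝ) ≤ i := by exact_mod_cast hi
              nlinarith
          push_cast [node]
          rw [div_sub_div _ _ (by positivity) (by positivity),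
            div_le_div_iff₀ (by positivity) (by positivity)]
          nlinarith
    _ = 2 / 3 - 2 / 3 / ((D : ℝ) + 1) := by rw [sum_range_sub']; simp
    _ ≤ 2 / 3 := sub_le_self _ (by positivity)

lemma lagrangeWeight_zero_pos (D : ℕ) : 0 < lagrangeWeight D 0 := by
  rw [lagrangeWeight_zero_eq]; positivity

lemma lagrangeWeight_zero_lt_three (D : ℕ) : lagrangeWeight D 0 < 3 := by
  rw [lagrangeWeight_zero_eq]
  calc _ ≤ ∏ i ∈ range D, Real.exp (1 / (2 * ((i : ℝ) + 1) ^ 2)) :=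
        prod_le_prod (fun _ _ => by positivity) fun i _ => by
          linarith [Real.add_one_le_exp (1 / (2 * ((i : ℝ) + 1) ^ 2))]
    _ = Real.exp (∑ i ∈ range D, 1 / (2 * ((i : ℝ) + 1) ^ 2)) := (Real.exp_sum _ _).symm
    _ ≤ Real.exp 1 := Real.exp_le_exp.2 (sum_range_inv_two_mul_sq_le D)
    _ < 3 := by linarith [Real.exp_one_lt_d9]


lemma sum_abs_lagrangeWeight_le (D : ℕ) :
    ∑ j ∈ range D, |lagrangeWeight D (j + 1)| ≤ 4 / 3 * lagrangeWeight D 0 := by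
  have hw0 := lagrangeWeight_zero_pos D
  calc _ ≤ ∑ j ∈ range D, 2 * lagrangeWeight D 0 * (1 / node (j + 1)) :=
        sum_le_sum fun j hj => by
          rw [mul_one_div, le_div_iff₀ (node_pos _), ← abs_of_pos hw0]
          exact abs_lagrangeWeight_mul_node_le (by omega) (by simpa using hj)
    _ ≤ 2 * lagrangeWeight D 0 * (2 / 3) := by
        rw [← mul_sum]; gcongr; exact sum_range_inv_node_le D
    _ = 4 / 3 * lagrangeWeight D 0 := by ring

lemma eval_zero_eq_sum_lagrangeWeight {𝕜 : Type*} [RCLike 𝕜] {q : 𝕜[X]} {D : ℕ}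
    (hq : q.natDegree ≤ D) :
    q.eval 0 = ∑ j ∈ range (D + 1), q.eval (node j : 𝕜) * (lagrangeWeight D j : 𝕜) := by
  have hinj : Set.InjOn (fun j => (node j : 𝕜)) (range (D + 1)) := fun i _ j _ h =>
    node_strictMono.injective (Nat.cast_injective h)
  have hdeg : q.degree < #(range (D + 1)) := by
    rw [card_range]
    exact degree_le_natDegree.trans_lt (by exact_mod_cast Nat.lt_succ_of_le hq)
  rw [eval_eq_sum_mul_prod_div hinj hdeg 0]
  refine sum_congr rfl fun j _ => congrArg _ ?_
  simp only [lagrangeWeight]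
  push_cast
  exact prod_congr rfl fun i _ => by rw [zero_sub, neg_div, ← div_neg, neg_sub]

theorem le_two_mul_sq_of_norm_eval_le_one {𝕜 : Type*} [RCLike 𝕜] {q : 𝕜[X]} {D N : ℕ}
    (hq : q.natDegree ≤ D) (h0 : q.eval 0 = 1) (h1 : q.eval 1 = -1)
    (hb : ∀ k ≤ N, ‖q.eval (k : 𝕜)‖ ≤ 1) : N ≤ 2 * D ^ 2 := by
  by_contra! hN
  set w := lagrangeWeight D
  have hinterp := eval_zero_eq_sum_lagrangeWeight hq
  rw [sum_range_succ', h0, show ((node 0 : ℕ) : 𝕜) = 1 by norm_num [node], h1] at hinterp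
  have hnode : ∀ j < D, ‖q.eval (node (j + 1) : 𝕜)‖ ≤ 1 := fun j hj =>
    hb _ (by linarith [node_strictMono.monotone (show j + 1 ≤ D by omega),
      show node D = 2 * D ^ 2 + 1 from rfl])
  have hw0 : 0 < w 0 := lagrangeWeight_zero_pos D
  have key : 1 + w 0 ≤ ∑ j ∈ range D, |w (j + 1)| :=
    calc 1 + w 0 = ‖∑ j ∈ range D, q.eval (node (j + 1) : 𝕜) * (w (j + 1) : 𝕜)‖ := by
          rw [show ∑ j ∈ range D, q.eval (node (j + 1) : 𝕜) * (w (j + 1) : 𝕜)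
            = ((1 + w 0 : ℝ) : 𝕜) by push_cast; linear_combination -hinterp]
          rw [RCLike.norm_ofReal, abs_of_pos (by linarith)]
      _ ≤ ∑ j ∈ range D, |w (j + 1)| := by
          refine (norm_sum_le _ _).trans (sum_le_sum fun j hj => ?_)
          rw [norm_mul, RCLike.norm_ofReal]
          exact mul_le_of_le_one_left (abs_nonneg _) (hnode j (mem_range.1 hj))
  linarith [sum_abs_lagrangeWeight_le D, lagrangeWeight_zero_lt_three D]

theorem card_le_two_mul_totalDegree_sq {𝕜 σ : Type*} [RCLike 𝕜] [DecidableEq σ]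
    (P : MvPolynomial σ 𝕜) (u v : σ → 𝕜) (S : Finset σ)
    (hcube : ∀ A ⊆ S, ‖MvPolynomial.eval (A.piecewise u v) P‖ ≤ 1)
    (hv : MvPolynomial.eval v P = 1)
    (hflip : ∀ i ∈ S, MvPolynomial.eval (Function.update v i (u i)) P = -1) :
    #S ≤ 2 * P.totalDegree ^ 2 := by
  rcases S.eq_empty_or_nonempty with rfl | hS
  · simp
  obtain ⟨p, hp, hpk⟩ := P.exists_natDegree_le_choose_mul_eval_piecewise_eq_sum u v S
  refine le_two_mul_sq_of_norm_eval_le_one hp ?_ ?_ fun k hk => ?_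
  · simpa [hv] using hpk 0 (Nat.zero_le _)
  · have h1 := hpk 1 hS.card_pos
    rw [powersetCard_one, sum_map] at h1
    simp only [Function.Embedding.coeFn_mk, piecewise_singleton] at h1
    rw [sum_congr rfl hflip, sum_const, Nat.choose_one_right, Nat.cast_one] at h1
    have hN : (#S : 𝕜) ≠ 0 := by exact_mod_cast hS.card_pos.ne'
    apply mul_left_cancel₀ hN
    rw [h1, nsmul_eq_mul, mul_neg_one]
  · have hpos : (0 : ℝ) < (#S).choose k := by exact_mod_cast Nat.choose_pos hk
    have hsum : ‖((#S).choose k : 𝕜) * p.eval (k : 𝕜)‖ ≤ (#S).choose k := by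
      rw [hpk k hk]
      refine (norm_sum_le _ _).trans ?_
      simpa [card_powersetCard] using sum_le_sum fun A hA => hcube A (mem_powersetCard.1 hA).1
    rw [norm_mul, RCLike.norm_natCast] at hsum
    exact le_of_mul_le_mul_left (by linarith) hpos

variable {T : Finset ℂ} {n : ℕ}

theorem exists_represents (f : (Fin n → T) → T) : ∃ F, Represents T n F f := by
  have hbasis : ∀ x y : Fin n → T,
      ∏ i, (Lagrange.basis T id (x i : ℂ)).eval (y i : ℂ) = if x = y then 1 else 0 := by
    intro x y
    split_ifs with hxy
    · subst hxy
      exact prod_eq_one fun i _ => Lagrange.eval_basis_self (v := id) (Set.injOn_id _) (x i).2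
    · obtain ⟨i, hi⟩ := Function.ne_iff.1 hxy
      exact prod_eq_zero (mem_univ i)
        (Lagrange.eval_basis_of_ne (v := id) (fun h => hi (Subtype.ext h)) (y i).2)
  refine ⟨∑ x, MvPolynomial.C (f x : ℂ) *
    ∏ i, Polynomial.aeval (MvPolynomial.X i) (Lagrange.basis T id (x i : ℂ)), fun y => ?_⟩
  simp only [map_sum, map_mul, map_prod, MvPolynomial.eval_C, MvPolynomial.eval_polynomial_aeval,
    MvPolynomial.eval_X, hbasis, mul_ite, mul_one, mul_zero, sum_ite_eq', mem_univ, if_true]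

theorem exists_represents_totalDegree_eq (f : (Fin n → T) → T) :
    ∃ F, Represents T n F f ∧ F.totalDegree = degreeF T n f :=
  Nat.sInf_mem (s := {d | ∃ F : MvPolynomial (Fin n) ℂ, Represents T n F f ∧ F.totalDegree = d})
    (let ⟨F, hF⟩ := exists_represents f; ⟨_, F, hF, rfl⟩)

def sensitiveCoords (f : (Fin n → T) → T) (x : Fin n → T) : Finset (Fin n) :=
  {i | ∃ t, f (Function.update x i t) ≠ f x}

theorem localSens_le (f : (Fin n → T) → T) (x : Fin n → T) :
    localSens T n f x ≤ (#T - 1) * #(sensitiveCoords f x) := by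
  calc localSens T n f x
      ≤ #((sensitiveCoords f x).biUnion fun i =>
          (univ.erase (x i)).image (Function.update x i)) := by
        refine card_le_card fun y hy => ?_
        obtain ⟨hdist, hfy⟩ := (mem_filter.1 hy).2
        obtain ⟨i, hyi, hy⟩ := exists_eq_update_of_hammingDist_eq_one hdist
        exact mem_biUnion.2 ⟨i, mem_filter.2 ⟨mem_univ i, y i, hy ▸ hfy⟩,
          mem_image.2 ⟨y i, mem_erase.2 ⟨hyi, mem_univ _⟩, hy.symm⟩⟩
    _ ≤ ∑ i ∈ sensitiveCoords f x, #((univ.erase (x i)).image (Function.update x i)) :=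
        card_biUnion_le
    _ ≤ ∑ _i ∈ sensitiveCoords f x, (#T - 1) := sum_le_sum fun i _ => card_image_le.trans <| by
        rw [card_erase_of_mem (mem_univ _), card_univ, Fintype.card_coe]
    _ = (#T - 1) * #(sensitiveCoords f x) := by rw [sum_const, smul_eq_mul, mul_comm]

theorem card_sensitiveCoords_le {f : (Fin n → T) → T} {F : MvPolynomial (Fin n) ℂ}
    (hF : Represents T n F f) (x : Fin n → T) :
    #(sensitiveCoords f x) ≤ 2 * ((#T - 1) * F.totalDegree) ^ 2 := by
  have : Nonempty T := ⟨f x⟩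
  have hsens : ∀ i ∈ sensitiveCoords f x, ∃ t, f (Function.update x i t) ≠ f x :=
    fun i hi => (mem_filter.1 hi).2
  choose! w hw using hsens
  set Q := Polynomial.aeval F (Lagrange.interpolate T id fun t => if t = (f x : ℂ) then 1 else -1)
  have hQ : ∀ y : Fin n → T,
      MvPolynomial.eval (fun i => (y i : ℂ)) Q = if f y = f x then 1 else -1 := fun y => by
    rw [MvPolynomial.eval_polynomial_aeval, hF y, ← id_eq (f y : ℂ),
      Lagrange.eval_interpolate_at_node _ (Set.injOn_id _) (f y).2]
    simp only [Subtype.val_inj]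
  have hQdeg : Q.totalDegree ≤ (#T - 1) * F.totalDegree :=
    (MvPolynomial.totalDegree_polynomial_aeval_le _ _).trans <| Nat.mul_le_mul_right _ <|
      natDegree_le_iff_degree_le.2 (Lagrange.degree_interpolate_le _ (Set.injOn_id _))
  refine (card_le_two_mul_totalDegree_sq Q (fun i => (w i : ℂ)) (fun i => (x i : ℂ)) _
    (fun A _ => ?_) (by simpa using hQ x) fun i hi => ?_).trans (by gcongr)
  · have hcomp : A.piecewise (fun i => (w i : ℂ)) (fun i => (x i : ℂ))
        = fun i => (A.piecewise w x i : ℂ) := by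
      funext i; by_cases hi : i ∈ A <;> simp [hi]
    rw [hcomp, hQ]
    split_ifs <;> simp
  · have hupd : Function.update (fun i => (x i : ℂ)) i (w i : ℂ)
        = fun j => (Function.update x i (w i) j : ℂ) := (Function.comp_update _ _ _ _).symm
    rw [hupd, hQ, if_neg (hw i hi)]

end Sensitivity

theorem stmt0_general (m n : ℕ)
    (T : Finset ℂ) (hT : T.card = m) (f : (Fin n → ↥T) → ↥T) :
    sens T n f ≤ 2 * (m - 1) ^ 3 * (degreeF T n f) ^ 2 := by
  obtain ⟨F, hF, hdeg⟩ := Sensitivity.exists_represents_totalDegree_eq f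
  refine Finset.sup_le fun x _ => ?_
  calc localSens T n f x ≤ (m - 1) * #(Sensitivity.sensitiveCoords f x) :=
        hT ▸ Sensitivity.localSens_le f x
    _ ≤ (m - 1) * (2 * ((m - 1) * F.totalDegree) ^ 2) :=
        Nat.mul_le_mul_left _ (hT ▸ Sensitivity.card_sensitiveCoords_le hF x)
    _ = 2 * (m - 1) ^ 3 * degreeF T n f ^ 2 := by rw [hdeg]; ring

theorem stmt0 (m n : ℕ) (hm : 2 ≤ m) (hn : 1 ≤ n)
    (T : Finset ℂ) (hT : T.card = m) (f : (Fin n → ↥T) → ↥T) :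
    sens T n f ≤ 2 * (m - 1) ^ 3 * (degreeF T n f) ^ 2 :=
  stmt0_general m n T hT f
end
end

section
/- Let T = {t_0,…,t_{m-1}} and T' = {t_0',…,t_{m-1}'} be subsets of ℂ of size m, let f : T^n → T be an m-ary function, and let g : (T')^n → (T')^n be the m-ary function obtained from f by identifying t_i with t_i' (i.e. g = φ ∘ f ∘ (φ^{-1})^n where φ(t_i) = t_i'). Then s(f) = s(g), bs(f) = bs(g), and (m-1)^{-2}·deg(f) ≤ deg(g) ≤ (m-1)^2·deg(f). -/
open scoped Classical

noncomputable section

/-- `shiftBy e x S` changes the `j`-th entry of `x` from `t_{i_j}` to `t_{(i_j + S j) mod m}`,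
where `e : ZMod m ≃ T` is the fixed enumeration of `T` and `S` is a multisubset of `[n]`
given by its multiplicity function. -/
def shiftBy {T : Finset ℂ} {m n : ℕ} (e : ZMod m ≃ ↥T) (x : Fin n → ↥T) (S : Fin n → ℕ) :
    Fin n → ↥T :=
  fun j => e (e.symm (x j) + (S j : ZMod m))

/-- Local block sensitivity of `f` at `x`: the largest `k` admitting `k` pairwise disjoint
multisubsets `B 0, …, B (k-1)` of `[n]` with `f (x ^ (B i)) ≠ f x` for all `i`. -/
def localBS {T : Finset ℂ} {m n : ℕ} (e : ZMod m ≃ ↥T) (f : (Fin n → ↥T) → ↥T)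
    (x : Fin n → ↥T) : ℕ :=
  sSup {k | ∃ B : Fin k → Fin n → ℕ,
    (∀ i j : Fin k, i ≠ j → ∀ a, B i a = 0 ∨ B j a = 0) ∧
    ∀ i, f (shiftBy e x (B i)) ≠ f x}

/-- Block sensitivity of `f`. -/
def blockSens {T : Finset ℂ} {m n : ℕ} (e : ZMod m ≃ ↥T) (f : (Fin n → ↥T) → ↥T) : ℕ :=
  Finset.univ.sup (localBS e f)

/-! ### Auxiliary lemmas -/

lemma totalDegree_aeval_le' {n : ℕ} (F : MvPolynomial (Fin n) ℂ)
    (g : Fin n → MvPolynomial (Fin n) ℂ) (D : ℕ) (hg : ∀ i, (g i).totalDegree ≤ D) :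
    ((MvPolynomial.aeval g) F).totalDegree ≤ F.totalDegree * D := by
  conv_lhs => rw [F.as_sum]
  rw [map_sum]
  refine (MvPolynomial.totalDegree_finset_sum _ _).trans ?_
  apply Finset.sup_le
  intro d hd
  rw [MvPolynomial.aeval_monomial]
  refine (MvPolynomial.totalDegree_mul _ _).trans ?_
  have h1 : (algebraMap ℂ (MvPolynomial (Fin n) ℂ) (F.coeff d)).totalDegree = 0 := by
    simp [MvPolynomial.algebraMap_eq]
  rw [h1, zero_add]
  rw [Finsupp.prod]
  refine (MvPolynomial.totalDegree_finset_prod _ _).trans ?_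
  calc ∑ i ∈ d.support, (g i ^ d i).totalDegree
      ≤ ∑ i ∈ d.support, d i * D := by
        refine Finset.sum_le_sum fun i _ => ?_
        exact (MvPolynomial.totalDegree_pow _ _).trans
          (Nat.mul_le_mul_left _ (hg i))
    _ = (d.sum fun _ k => k) * D := by rw [Finsupp.sum, Finset.sum_mul]
    _ ≤ F.totalDegree * D := Nat.mul_le_mul_right _ (MvPolynomial.le_totalDegree hd)

lemma totalDegree_polyComp_le {n : ℕ} (G : MvPolynomial (Fin n) ℂ) (Q : Polynomial ℂ) :
    (Polynomial.aeval G Q).totalDegree ≤ Q.natDegree * G.totalDegree := by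
  rw [Polynomial.aeval_def, Polynomial.eval₂_eq_sum, Polynomial.sum]
  refine (MvPolynomial.totalDegree_finset_sum _ _).trans ?_
  apply Finset.sup_le
  intro k hk
  refine (MvPolynomial.totalDegree_mul _ _).trans ?_
  have h1 : (algebraMap ℂ (MvPolynomial (Fin n) ℂ) (Q.coeff k)).totalDegree = 0 := by
    simp [MvPolynomial.algebraMap_eq]
  rw [h1, zero_add]
  exact (MvPolynomial.totalDegree_pow _ _).trans
    (Nat.mul_le_mul_right _ (Polynomial.le_natDegree_of_mem_supp _ hk))

lemma exists_interp (S : Finset ℂ) (hS : 0 < S.card) (v : ℂ → ℂ) :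
    ∃ P : Polynomial ℂ, P.natDegree ≤ S.card - 1 ∧ ∀ s ∈ S, P.eval s = v s := by
  refine ⟨Lagrange.interpolate S id v, ?_, fun s hs => ?_⟩
  · rcases eq_or_ne (Lagrange.interpolate S id v) 0 with h | h
    · simp [h]
    · have := Lagrange.degree_interpolate_lt (s := S) (r := v) (Set.injOn_id _)
      rw [← Polynomial.natDegree_lt_iff_degree_lt h] at this
      omega
  · exact Lagrange.eval_interpolate_at_node v (Set.injOn_id _) hs

lemma exists_represents (T : Finset ℂ) (n : ℕ) (f : (Fin n → ↥T) → ↥T) :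
    ∃ F : MvPolynomial (Fin n) ℂ, Represents T n F f := by
  classical
  set ind : (Fin n → ↥T) → MvPolynomial (Fin n) ℂ := fun a =>
    ∏ j, ∏ t ∈ T.erase (a j),
      (MvPolynomial.C (((a j : ℂ) - t)⁻¹) * (MvPolynomial.X j - MvPolynomial.C t)) with hind
  have hev : ∀ (a x : Fin n → ↥T),
      MvPolynomial.eval (fun i => (x i : ℂ)) (ind a) = if x = a then 1 else 0 := by
    intro a x
    rw [hind]
    simp only [map_prod, map_mul, map_sub, MvPolynomial.eval_C, MvPolynomial.eval_X]
    split_ifs with h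
    · subst h
      refine Finset.prod_eq_one fun j _ => Finset.prod_eq_one fun t ht => ?_
      have : (x j : ℂ) - t ≠ 0 := sub_ne_zero.mpr (Ne.symm (Finset.ne_of_mem_erase ht))
      exact inv_mul_cancel₀ this
    · have ⟨j, hj⟩ : ∃ j, x j ≠ a j := by
        by_contra hc; push_neg at hc; exact h (funext hc)
      refine Finset.prod_eq_zero (Finset.mem_univ j) ?_
      refine Finset.prod_eq_zero (i := (x j : ℂ)) ?_ (by simp)
      exact Finset.mem_erase.mpr ⟨fun hc => hj (Subtype.ext hc), (x j).2⟩
  refine ⟨∑ a : Fin n → ↥T, MvPolynomial.C (f a : ℂ) * ind a, fun x => ?_⟩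
  simp only [map_sum, map_mul, MvPolynomial.eval_C, hev]
  rw [Finset.sum_eq_single x]
  · simp
  · intro b _ hb; simp [Ne.symm hb]
  · simp

lemma eval_eq_aeval {n : ℕ} (c : Fin n → ℂ) (p : MvPolynomial (Fin n) ℂ) :
    MvPolynomial.eval c p = MvPolynomial.aeval c p := by
  rw [← MvPolynomial.coe_aeval_eq_eval]; rfl

lemma degree_transfer (m n : ℕ) (hm : 2 ≤ m)
    (T T' : Finset ℂ) (hT : T.card = m) (hT' : T'.card = m)
    (φ : ↥T ≃ ↥T')
    (f : (Fin n → ↥T) → ↥T) (g : (Fin n → ↥T') → ↥T')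
    (hgf : ∀ y : Fin n → ↥T, g (fun i => φ (y i)) = φ (f y)) :
    degreeF T' n g ≤ (m - 1) ^ 2 * degreeF T n f := by
  classical
  obtain ⟨F₀, hF₀⟩ := exists_represents T n f
  have hmem := Nat.sInf_mem (s := {d | ∃ F : MvPolynomial (Fin n) ℂ,
    Represents T n F f ∧ F.totalDegree = d}) ⟨_, F₀, hF₀, rfl⟩
  obtain ⟨F, hF, hFdeg⟩ := hmem
  obtain ⟨P, hPdeg, hPval⟩ := exists_interp T' (by rw [hT']; omega)
    (fun s => if h : s ∈ T' then ((φ.symm ⟨s, h⟩ : ↥T) : ℂ) else 0)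
  obtain ⟨Q, hQdeg, hQval⟩ := exists_interp T (by rw [hT]; omega)
    (fun t => if h : t ∈ T then ((φ ⟨t, h⟩ : ↥T') : ℂ) else 0)
  rw [hT'] at hPdeg; rw [hT] at hQdeg
  set H : MvPolynomial (Fin n) ℂ :=
    MvPolynomial.aeval (fun i => Polynomial.aeval (MvPolynomial.X i) P) F with hH
  set G : MvPolynomial (Fin n) ℂ := Polynomial.aeval H Q with hG
  have hGrep : Represents T' n G g := by
    intro x
    set A : MvPolynomial (Fin n) ℂ →ₐ[ℂ] ℂ := MvPolynomial.aeval (fun i => (x i : ℂ)) with hA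
    have step1 : MvPolynomial.eval (fun i => (x i : ℂ)) G = Polynomial.aeval (A H) Q := by
      rw [eval_eq_aeval, hG, ← Polynomial.aeval_algHom_apply]
    have step2 : A H = MvPolynomial.eval (fun i => P.eval (x i : ℂ)) F := by
      have inner : (fun i => A ((Polynomial.aeval (MvPolynomial.X i)) P))
          = fun i => P.eval (x i : ℂ) := by
        funext i
        rw [← Polynomial.aeval_algHom_apply]
        have hXi : A (MvPolynomial.X i) = (x i : ℂ) := by simp [hA]
        rw [hXi, Polynomial.coe_aeval_eq_eval]
      rw [hH, ← AlgHom.comp_apply, MvPolynomial.comp_aeval, inner, eval_eq_aeval]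
    have step3 : (fun i => P.eval (x i : ℂ)) = fun i => ((φ.symm (x i) : ↥T) : ℂ) := by
      funext i
      rw [hPval _ (x i).2]
      simp
    rw [step1, step2, step3, hF]
    have step4 : Polynomial.aeval ((f fun i => φ.symm (x i) : ↥T) : ℂ) Q
        = Q.eval ((f fun i => φ.symm (x i) : ↥T) : ℂ) := by
      rw [Polynomial.coe_aeval_eq_eval]
    rw [step4, hQval _ (f fun i => φ.symm (x i)).2,
      dif_pos (f fun i => φ.symm (x i)).2, Subtype.coe_eta]
    have := hgf (fun i => φ.symm (x i))
    simp only [Equiv.apply_symm_apply] at this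
    exact congrArg Subtype.val this.symm
  have hHdeg : H.totalDegree ≤ F.totalDegree * (m - 1) := by
    refine totalDegree_aeval_le' F _ (m - 1) fun i => ?_
    refine (totalDegree_polyComp_le _ P).trans ?_
    rw [MvPolynomial.totalDegree_X]
    simpa using hPdeg
  have hGdeg : G.totalDegree ≤ (m - 1) ^ 2 * F.totalDegree := by
    refine (totalDegree_polyComp_le H Q).trans ?_
    calc Q.natDegree * H.totalDegree ≤ (m - 1) * (F.totalDegree * (m - 1)) :=
          Nat.mul_le_mul hQdeg hHdeg
      _ = (m - 1) ^ 2 * F.totalDegree := by ring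
  calc degreeF T' n g ≤ G.totalDegree := Nat.sInf_le ⟨G, hGrep, rfl⟩
    _ ≤ (m - 1) ^ 2 * F.totalDegree := hGdeg
    _ = (m - 1) ^ 2 * degreeF T n f := by rw [hFdeg]; rfl

lemma sens_transfer (m n : ℕ)
    (T T' : Finset ℂ) (φ : ↥T ≃ ↥T')
    (f : (Fin n → ↥T) → ↥T) (g : (Fin n → ↥T') → ↥T')
    (hgf : ∀ y : Fin n → ↥T, g (fun i => φ (y i)) = φ (f y)) :
    sens T' n g ≤ sens T n f := by
  apply Finset.sup_le
  intro x' _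
  have key : localSens T' n g x' = localSens T n f (fun i => φ.symm (x' i)) := by
    unfold localSens
    apply Finset.card_nbij' (fun z => fun i => φ.symm (z i)) (fun y => fun i => φ (y i))
    · intro z hz
      simp only [Finset.mem_coe, Finset.mem_filter, Finset.mem_univ, true_and] at hz ⊢
      obtain ⟨h1, h2⟩ := hz
      constructor
      · rw [← h1]
        unfold hammingDist
        congr 1
        apply Finset.filter_congr
        intro i _
        simp [Equiv.symm_apply_eq, eq_comm]
      · have hz' := hgf (fun i => φ.symm (z i))
        simp only [Equiv.apply_symm_apply] at hz'
        have hx' := hgf (fun i => φ.symm (x' i))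
        simp only [Equiv.apply_symm_apply] at hx'
        intro hc
        apply h2
        calc g z = φ (f fun i => φ.symm (z i)) := hz'
          _ = φ (f fun i => φ.symm (x' i)) := by rw [hc]
          _ = g x' := hx'.symm
    · intro y hy
      simp only [Finset.mem_coe, Finset.mem_filter, Finset.mem_univ, true_and] at hy ⊢
      obtain ⟨h1, h2⟩ := hy
      constructor
      · rw [← h1]
        unfold hammingDist
        congr 1
        apply Finset.filter_congr
        intro i _
        simp [Equiv.eq_symm_apply, eq_comm]
      · have hy' := hgf y
        have hx' := hgf (fun i => φ.symm (x' i))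
        simp only [Equiv.apply_symm_apply] at hx'
        rw [hy', hx']
        exact fun hc => h2 (φ.injective hc)
    · intro z _; funext i; simp
    · intro y _; funext i; simp
  rw [key]
  exact Finset.le_sup (Finset.mem_univ _)

lemma bs_transfer (m n : ℕ) (T T' : Finset ℂ) (e : ZMod m ≃ ↥T) (e' : ZMod m ≃ ↥T')
    (f : (Fin n → ↥T) → ↥T) (g : (Fin n → ↥T') → ↥T')
    (hgf : ∀ y : Fin n → ↥T, g (fun i => e' (e.symm (y i))) = e' (e.symm (f y))) :
    blockSens e' g ≤ blockSens e f := by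
  apply Finset.sup_le
  intro x' _
  have key : localBS e' g x' = localBS e f (fun i => e (e'.symm (x' i))) := by
    unfold localBS
    congr 1
    ext k
    constructor <;> rintro ⟨B, hdisj, hne⟩ <;> refine ⟨B, hdisj, fun i => ?_⟩
    · intro hc
      apply hne i
      have hs : shiftBy e' x' (B i)
          = fun j => e' (e.symm (shiftBy e (fun i => e (e'.symm (x' i))) (B i) j)) := by
        funext j
        simp [shiftBy]
      rw [hs, hgf]
      have hx : x' = fun j => e' (e.symm ((fun i => e (e'.symm (x' i))) j)) := by
        funext j; simp
      conv_rhs => rw [hx]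
      rw [hgf]
      rw [hc]
    · intro hc
      apply hne i
      have hs : shiftBy e (fun i => e (e'.symm (x' i))) (B i)
          = fun j => e (e'.symm (shiftBy e' x' (B i) j)) := by
        funext j
        simp [shiftBy]
      rw [hs]
      have := hgf (fun j => e (e'.symm (shiftBy e' x' (B i) j)))
      simp only [Equiv.symm_apply_apply, Equiv.apply_symm_apply] at this
      have h2 := hgf (fun j => e (e'.symm (x' j)))
      simp only [Equiv.symm_apply_apply, Equiv.apply_symm_apply] at h2
      have this' : g (shiftBy e' x' (B i))
          = e' (e.symm (f fun j => e (e'.symm (shiftBy e' x' (B i) j)))) := this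
      have h2' : g x' = e' (e.symm (f fun j => e (e'.symm (x' j)))) := h2
      have hL : (f fun j => e (e'.symm (shiftBy e' x' (B i) j)))
          = e (e'.symm (g (shiftBy e' x' (B i)))) := by rw [this']; simp
      have hR : (f fun j => e (e'.symm (x' j))) = e (e'.symm (g x')) := by rw [h2']; simp
      rw [hL, hR, hc]
  rw [key]
  exact Finset.le_sup (Finset.mem_univ _)

theorem stmt3 (m n : ℕ) (hm : 2 ≤ m) (hn : 1 ≤ n)
    (T T' : Finset ℂ) (hT : T.card = m) (hT' : T'.card = m)
    (e : ZMod m ≃ ↥T) (e' : ZMod m ≃ ↥T')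
    (f : (Fin n → ↥T) → ↥T) (g : (Fin n → ↥T') → ↥T')
    (hg : ∀ x : Fin n → ↥T',
      g x = (e.symm.trans e') (f fun i => (e.symm.trans e').symm (x i))) :
    sens T n f = sens T' n g ∧
    blockSens e f = blockSens e' g ∧
    degreeF T n f ≤ (m - 1) ^ 2 * degreeF T' n g ∧
    degreeF T' n g ≤ (m - 1) ^ 2 * degreeF T n f := by
  set φ : ↥T ≃ ↥T' := e.symm.trans e' with hφ
  have hgf : ∀ y : Fin n → ↥T, g (fun i => φ (y i)) = φ (f y) := by
    intro y
    rw [hg]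
    congr 1
    congr 1
    funext i
    simp
  have hfg : ∀ y : Fin n → ↥T', f (fun i => φ.symm (y i)) = φ.symm (g y) := by
    intro y
    rw [hg y]
    simp
  refine ⟨?_, ?_, ?_, ?_⟩
  · exact le_antisymm
      (sens_transfer m n T' T φ.symm g f hfg)
      (sens_transfer m n T T' φ f g hgf)
  · have h1 : blockSens e' g ≤ blockSens e f := by
      refine bs_transfer m n T T' e e' f g fun y => ?_
      have := hgf y
      simpa [hφ, Equiv.trans_apply] using this
    have h2 : blockSens e f ≤ blockSens e' g := by
      refine bs_transfer m n T' T e' e g f fun y => ?_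
      have := hfg y
      simpa [hφ, Equiv.trans_apply] using this
    exact le_antisymm h2 h1
  · exact degree_transfer m n hm T' T hT' hT φ.symm g f hfg
  · exact degree_transfer m n hm T T' hT hT' φ f g hgf
end
end

section
/- Let f : U_m^n → U_m be an m-ary function and let F, G ∈ ℂ[x_1,…,x_n] be the unique polynomials of degree at most m-1 in each variable representing f and f_{ε^{m-1}}, respectively. Then F(0,…,0) equals the coefficient of the monomial (x_1⋯x_n)^{m-1} in G. In particular, deg(f_{ε^{m-1}}) = (m-1)·n if and only if E(f) ≠ 0, where E(f) = (1/m^n)·Σ_{x ∈ U_m^n} f(x). -/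
open scoped Classical

noncomputable section

/-- The primitive `m`-th root of unity `ε = e^{2πi/m}`. -/
def primRoot (m : ℕ) : ℂ := Complex.exp (2 * Real.pi * Complex.I / m)

/-- The bijection `k ↦ ε^k` from `ZMod m` onto the set `U_m` of `m`-th roots of unity;
vectors of `U_m^n` are modelled by their exponent vectors in `(ZMod m)^n`. -/
def uRoot (m : ℕ) (k : ZMod m) : ℂ := primRoot m ^ k.val

/-- `F` represents the `m`-ary function `U_m^n → U_m` given in exponents by `g`,
i.e. the function `(ε^{x 1}, …, ε^{x n}) ↦ ε^{g x}`. -/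
def RepresentsU (m n : ℕ) (F : MvPolynomial (Fin n) ℂ)
    (g : (Fin n → ZMod m) → ZMod m) : Prop :=
  ∀ x : Fin n → ZMod m, MvPolynomial.eval (fun i => uRoot m (x i)) F = uRoot m (g x)

/-- Degree of the `m`-ary function `U_m^n → U_m` given in exponents by `g`. -/
def degU (m n : ℕ) (g : (Fin n → ZMod m) → ZMod m) : ℕ :=
  sInf {d | ∃ F : MvPolynomial (Fin n) ℂ, RepresentsU m n F g ∧ F.totalDegree = d}

/-- Local sensitivity of the `m`-ary function `U_m^n → U_m` given in exponents by `g`. -/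
def localSensU (m n : ℕ) [NeZero m] (g : (Fin n → ZMod m) → ZMod m)
    (x : Fin n → ZMod m) : ℕ :=
  (Finset.univ.filter fun y : Fin n → ZMod m => hammingDist x y = 1 ∧ g y ≠ g x).card

/-- Sensitivity of the `m`-ary function `U_m^n → U_m` given in exponents by `g`. -/
def sensU (m n : ℕ) [NeZero m] (g : (Fin n → ZMod m) → ZMod m) : ℕ :=
  Finset.univ.sup (localSensU m n g)

/-- The average value `E(f) = m^{-n} Σ_{x ∈ U_m^n} f(x)` of the `m`-ary function
`U_m^n → U_m` given in exponents by `g`. -/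
def Emean (m n : ℕ) [NeZero m] (g : (Fin n → ZMod m) → ZMod m) : ℂ :=
  (1 / (m : ℂ) ^ n) * ∑ x : Fin n → ZMod m, uRoot m (g x)

/-- In exponent coordinates, the function `f_{ε^i}(x) = f(x)·(x_1 ⋯ x_n)^i` becomes
`x ↦ g x + i • (Σ_j x_j)`. -/
def feps (m n : ℕ) (i : ℕ) (g : (Fin n → ZMod m) → ZMod m) :
    (Fin n → ZMod m) → ZMod m :=
  fun x => g x + (i : ZMod m) * ∑ j, x j


section AuxLemmas

variable (m : ℕ) [NeZero m]

lemma primRoot_isPrim : IsPrimitiveRoot (primRoot m) m :=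
  Complex.isPrimitiveRoot_exp m (NeZero.ne m)

lemma primRoot_pow_self : primRoot m ^ m = 1 := (primRoot_isPrim m).pow_eq_one

lemma uRoot_add (a b : ZMod m) : uRoot m (a + b) = uRoot m a * uRoot m b := by
  unfold uRoot
  rw [ZMod.val_add, ← pow_eq_pow_mod _ (primRoot_pow_self m), pow_add]

lemma uRoot_zero : uRoot m 0 = 1 := by simp [uRoot]

lemma uRoot_sum {ι : Type*} (s : Finset ι) (x : ι → ZMod m) :
    uRoot m (∑ j ∈ s, x j) = ∏ j ∈ s, uRoot m (x j) := by
  classical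
  induction s using Finset.cons_induction with
  | empty => simpa using uRoot_zero m
  | cons a s ha ih => rw [Finset.sum_cons, Finset.prod_cons, uRoot_add, ih]

lemma sum_pow_val (t : ℕ) :
    ∑ k : ZMod m, primRoot m ^ (k.val * t) = if m ∣ t then (m : ℂ) else 0 := by
  have h1 : ∀ k : ZMod m, primRoot m ^ (k.val * t) = (primRoot m ^ t) ^ k.val := fun k => by
    rw [← pow_mul, mul_comm]
  have h2 : ∑ k : ZMod m, primRoot m ^ (k.val * t)
      = ∑ i ∈ Finset.range m, (primRoot m ^ t) ^ i := by
    simp_rw [h1]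
    refine Finset.sum_nbij' (fun k => k.val) (fun i => (i : ZMod m)) ?_ ?_ ?_ ?_ ?_
    · intro a _; exact Finset.mem_range.mpr (ZMod.val_lt a)
    · intro a _; exact Finset.mem_univ _
    · intro a _; exact ZMod.natCast_rightInverse a
    · intro a ha; exact ZMod.val_natCast_of_lt (Finset.mem_range.mp ha)
    · intro a _; rfl
  rw [h2]
  by_cases h : m ∣ t
  · have : primRoot m ^ t = 1 := ((primRoot_isPrim m).pow_eq_one_iff_dvd t).mpr h
    simp [this, if_pos h]
  · have hne : primRoot m ^ t ≠ 1 := fun hh => h (((primRoot_isPrim m).pow_eq_one_iff_dvd t).mp hh)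
    rw [if_neg h, geom_sum_eq hne, ← pow_mul, mul_comm t m, pow_mul, primRoot_pow_self]
    simp

lemma master (n : ℕ) (P : MvPolynomial (Fin n) ℂ) (w : Fin n → ℕ) :
    ∑ x : Fin n → ZMod m,
        (MvPolynomial.eval (fun i => uRoot m (x i)) P) * ∏ j, uRoot m (x j) ^ w j
      = ∑ a ∈ P.support, P.coeff a *
          (if ∀ j, m ∣ (a j + w j) then (m : ℂ) ^ n else 0) := by
  have key : ∀ x : Fin n → ZMod m, ∀ a : Fin n →₀ ℕ,
      (∏ i, uRoot m (x i) ^ a i) * ∏ j, uRoot m (x j) ^ w j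
        = ∏ j, primRoot m ^ ((x j).val * (a j + w j)) := by
    intro x a
    rw [← Finset.prod_mul_distrib]
    refine Finset.prod_congr rfl fun j _ => ?_
    rw [uRoot, ← pow_mul, ← pow_mul, ← pow_add, ← mul_add]
  calc ∑ x : Fin n → ZMod m,
        (MvPolynomial.eval (fun i => uRoot m (x i)) P) * ∏ j, uRoot m (x j) ^ w j
      = ∑ x : Fin n → ZMod m, ∑ a ∈ P.support,
          P.coeff a * ∏ j, primRoot m ^ ((x j).val * (a j + w j)) := by
        refine Finset.sum_congr rfl fun x _ => ?_
        rw [MvPolynomial.eval_eq', Finset.sum_mul]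
        exact Finset.sum_congr rfl fun a _ => by rw [mul_assoc, key]
    _ = ∑ a ∈ P.support, P.coeff a *
          ∑ x : Fin n → ZMod m, ∏ j, primRoot m ^ ((x j).val * (a j + w j)) := by
        rw [Finset.sum_comm]
        exact Finset.sum_congr rfl fun a _ => by rw [Finset.mul_sum]
    _ = ∑ a ∈ P.support, P.coeff a *
          (if ∀ j, m ∣ (a j + w j) then (m : ℂ) ^ n else 0) := by
        refine Finset.sum_congr rfl fun a _ => ?_
        congr 1
        have hps := Finset.prod_univ_sum (fun _ : Fin n => (Finset.univ : Finset (ZMod m)))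
          (fun j k => primRoot m ^ (k.val * (a j + w j)))
        rw [Fintype.piFinset_univ] at hps
        rw [← hps]
        simp_rw [sum_pow_val]
        by_cases h : ∀ j, m ∣ a j + w j
        · simp [h, Finset.prod_const, Finset.card_univ]
        · obtain ⟨j, hj⟩ := not_forall.mp h
          rw [if_neg h]
          exact Finset.prod_eq_zero (Finset.mem_univ j) (if_neg hj)

end AuxLemmas


lemma sum_if_pick {α : Type*} (s : Finset α) (c : α → ℂ) (q : α → Prop)
    [DecidablePred q] (b : α) (z : ℂ)
    (hb : ∀ a ∈ s, q a → a = b) (hq : q b) (hc : b ∉ s → c b = 0) :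
    ∑ a ∈ s, c a * (if q a then z else 0) = c b * z := by
  classical
  by_cases hbs : b ∈ s
  · rw [Finset.sum_eq_single_of_mem b hbs, if_pos hq]
    intro a ha hab
    rw [if_neg fun hqa => hab (hb a ha hqa), mul_zero]
  · rw [hc hbs, zero_mul]
    refine Finset.sum_eq_zero fun a ha => ?_
    rw [if_neg fun hqa => hbs ((hb a ha hqa) ▸ ha), mul_zero]

theorem stmt8 (m n : ℕ) [NeZero m] (hm : 2 ≤ m) (hn : 1 ≤ n)
    (g : (Fin n → ZMod m) → ZMod m)
    (F G : MvPolynomial (Fin n) ℂ)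
    (hF : ∀ i, F.degreeOf i ≤ m - 1) (hFrep : RepresentsU m n F g)
    (hG : ∀ i, G.degreeOf i ≤ m - 1)
    (hGrep : RepresentsU m n G (feps m n (m - 1) g)) :
    MvPolynomial.eval (fun _ : Fin n => (0 : ℂ)) F =
      MvPolynomial.coeff (Finsupp.equivFunOnFinite.symm fun _ : Fin n => m - 1) G ∧
    (degU m n (feps m n (m - 1) g) = (m - 1) * n ↔ Emean m n g ≠ 0) := by
  classical
  have hm0 : 0 < m := Nat.pos_of_ne_zero (NeZero.ne m)
  have hmC : ((m : ℂ) ^ n) ≠ 0 := pow_ne_zero _ (Nat.cast_ne_zero.mpr (NeZero.ne m))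
  set t0 : Fin n →₀ ℕ := Finsupp.equivFunOnFinite.symm fun _ : Fin n => m - 1 with ht0
  have ht0j : ∀ j, t0 j = m - 1 := fun j => rfl
  have hFs : ∀ a ∈ F.support, ∀ j, a j < m := by
    intro a ha j
    exact (MvPolynomial.degreeOf_lt_iff hm0).mp
      (lt_of_le_of_lt (hF j) (Nat.sub_lt hm0 one_pos)) a ha
  have hGs : ∀ a ∈ G.support, ∀ j, a j < m := by
    intro a ha j
    exact (MvPolynomial.degreeOf_lt_iff hm0).mp
      (lt_of_le_of_lt (hG j) (Nat.sub_lt hm0 one_pos)) a ha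
  -- F identity
  have hA : ∑ x : Fin n → ZMod m, uRoot m (g x) = (m : ℂ) ^ n * F.coeff 0 := by
    have h0 : ∑ x : Fin n → ZMod m, uRoot m (g x)
        = ∑ x : Fin n → ZMod m,
            (MvPolynomial.eval (fun i => uRoot m (x i)) F) *
              ∏ j, uRoot m (x j) ^ (fun _ : Fin n => (0 : ℕ)) j := by
      refine Finset.sum_congr rfl fun x _ => ?_
      simp [hFrep x]
    rw [h0, master m n F (fun _ => 0)]
    refine (sum_if_pick F.support F.coeff _ 0 ((m : ℂ) ^ n) ?_ ?_ ?_).trans (mul_comm _ _)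
    · intro a ha hq
      refine Finsupp.ext fun j => ?_
      exact Nat.eq_zero_of_dvd_of_lt (by simpa using hq j) (hFs a ha j)
    · intro j; simp
    · intro hb
      exact MvPolynomial.notMem_support_iff.mp hb
  -- the feps twist
  have hfe : ∀ x : Fin n → ZMod m,
      uRoot m (feps m n (m - 1) g x) * ∏ j, uRoot m (x j) = uRoot m (g x) := by
    intro x
    rw [← uRoot_sum m Finset.univ x, ← uRoot_add m]
    congr 1
    show g x + ((m - 1 : ℕ) : ZMod m) * (∑ j, x j) + (∑ j, x j) = g x
    have hc1 : ((m - 1 : ℕ) : ZMod m) + 1 = 0 := by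
      have h2 : ((m - 1 : ℕ) : ZMod m) + ((1 : ℕ) : ZMod m) = ((m - 1 + 1 : ℕ) : ZMod m) :=
        (Nat.cast_add _ _).symm
      rw [Nat.cast_one] at h2
      rw [h2, Nat.sub_add_cancel hm0]
      exact ZMod.natCast_self m
    rw [add_assoc, ← add_one_mul, hc1, zero_mul, add_zero]
  -- G identity
  have hB : ∑ x : Fin n → ZMod m, uRoot m (g x) = (m : ℂ) ^ n * G.coeff t0 := by
    have h0 : ∑ x : Fin n → ZMod m, uRoot m (g x)
        = ∑ x : Fin n → ZMod m,
            (MvPolynomial.eval (fun i => uRoot m (x i)) G) *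
              ∏ j, uRoot m (x j) ^ (fun _ : Fin n => (1 : ℕ)) j := by
      refine Finset.sum_congr rfl fun x _ => ?_
      rw [hGrep x]
      simp only [pow_one]
      exact (hfe x).symm
    rw [h0, master m n G (fun _ => 1)]
    refine (sum_if_pick G.support G.coeff _ t0 ((m : ℂ) ^ n) ?_ ?_ ?_).trans (mul_comm _ _)
    · intro a ha hq
      refine Finsupp.ext fun j => ?_
      have h1 : m ≤ a j + 1 := Nat.le_of_dvd (Nat.succ_pos _) (hq j)
      have h2 : a j < m := hGs a ha j
      rw [ht0j]
      omega
    · intro j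
      rw [ht0j]
      have : m - 1 + 1 = m := by omega
      rw [this]
    · intro hb
      exact MvPolynomial.notMem_support_iff.mp hb
  have part1 : MvPolynomial.eval (fun _ : Fin n => (0 : ℂ)) F = G.coeff t0 := by
    have h1 : MvPolynomial.eval (fun _ : Fin n => (0 : ℂ)) F = F.coeff 0 := by
      rw [MvPolynomial.eval_zero', MvPolynomial.constantCoeff_eq]
    exact h1.trans (mul_left_cancel₀ hmC (hA.symm.trans hB))
  have hEco : Emean m n g = G.coeff t0 := by
    rw [Emean, hB, one_div, inv_mul_cancel_left₀ hmC]
  have hsum : (∑ _j : Fin n, (m - 1)) = (m - 1) * n := by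
    rw [Finset.sum_const, Finset.card_univ, Fintype.card_fin, smul_eq_mul, mul_comm]
  have hGle : G.totalDegree ≤ (m - 1) * n := by
    rw [MvPolynomial.totalDegree]
    refine Finset.sup_le fun a ha => ?_
    rw [Finsupp.sum_fintype _ _ fun _ => rfl]
    calc ∑ j, a j ≤ ∑ _j : Fin n, (m - 1) :=
          Finset.sum_le_sum fun j _ => by have := hGs a ha j; omega
      _ = (m - 1) * n := hsum
  have hmem : G.totalDegree ∈
      {d | ∃ P : MvPolynomial (Fin n) ℂ, RepresentsU m n P (feps m n (m - 1) g) ∧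
        P.totalDegree = d} := ⟨G, hGrep, rfl⟩
  have hlow : Emean m n g ≠ 0 → ∀ d ∈
      {d | ∃ P : MvPolynomial (Fin n) ℂ, RepresentsU m n P (feps m n (m - 1) g) ∧
        P.totalDegree = d}, (m - 1) * n ≤ d := by
    intro hE d hd
    obtain ⟨P, hPrep, rfl⟩ := hd
    by_contra hlt
    push_neg at hlt
    apply hE
    have h0 : ∑ x : Fin n → ZMod m, uRoot m (g x)
        = ∑ x : Fin n → ZMod m,
            (MvPolynomial.eval (fun i => uRoot m (x i)) P) *
              ∏ j, uRoot m (x j) ^ (fun _ : Fin n => (1 : ℕ)) j := by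
      refine Finset.sum_congr rfl fun x _ => ?_
      rw [hPrep x]
      simp only [pow_one]
      exact (hfe x).symm
    have h1 : ∑ x : Fin n → ZMod m, uRoot m (g x) = 0 := by
      rw [h0, master m n P (fun _ => 1)]
      refine Finset.sum_eq_zero fun a ha => ?_
      rw [if_neg, mul_zero]
      intro hq
      have hge : (m - 1) * n ≤ a.sum fun _ e => e := by
        rw [Finsupp.sum_fintype _ _ fun _ => rfl, ← hsum]
        refine Finset.sum_le_sum fun j _ => ?_
        have h1 : m ≤ a j + 1 := Nat.le_of_dvd (Nat.succ_pos _) (hq j)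
        omega
      have h2 := MvPolynomial.le_totalDegree ha
      omega
    rw [Emean, h1, mul_zero]
  refine ⟨part1, ?_, ?_⟩
  · intro hdeg
    by_contra hE0
    have hct : G.coeff t0 = 0 := hEco ▸ hE0
    have hGlt : G.totalDegree < (m - 1) * n := by
      have hpos : 0 < (m - 1) * n := Nat.mul_pos (by omega) (by omega)
      rw [MvPolynomial.totalDegree, Finset.sup_lt_iff hpos]
      intro a ha
      rw [Finsupp.sum_fintype _ _ fun _ => rfl]
      have hne : ∃ j, a j ≠ m - 1 := by
        by_contra hall
        push_neg at hall
        apply MvPolynomial.mem_support_iff.mp ha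
        have heq : a = t0 := Finsupp.ext fun j => by rw [hall j, ht0j]
        rw [heq]; exact hct
      obtain ⟨j, hj⟩ := hne
      calc ∑ j, a j < ∑ _j : Fin n, (m - 1) :=
            Finset.sum_lt_sum (fun i _ => by have := hGs a ha i; omega)
              ⟨j, Finset.mem_univ j, by have := hGs a ha j; omega⟩
        _ = (m - 1) * n := hsum
    have hle : degU m n (feps m n (m - 1) g) ≤ G.totalDegree := Nat.sInf_le hmem
    omega
  · intro hE
    have hlb := hlow hE
    have hGeq : G.totalDegree = (m - 1) * n := le_antisymm hGle (hlb _ hmem)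
    rw [degU]
    exact le_antisymm (hGeq ▸ Nat.sInf_le hmem) (le_csInf ⟨_, hmem⟩ hlb)


end
end

section
/- Let m, n ≥ 2 and let {A_1,…,A_k} be a partition of [n] = {1,…,n} into k nonempty sets. Identify the vertex set of the Hamming graph H(n,m) with {0,1,…,m-1}^n, and for i ∈ {1,…,m-1} let F_i = {x ∈ {0,…,m-1}^n : there exists j ∈ [k] with x_a ≥ i for all a ∈ A_j}. Let G_{m-1} be the induced subgraph on F_{m-1}, let G_i be the induced subgraph on F_i \ F_{i+1} for i ∈ {1,…,m-2}, and let G_0 be the induced subgraph on the complement of F_1. Then the vertex sets of G_0,…,G_{m-1} partition {0,…,m-1}^n, and for every i ∈ {0,…,m-1} one has δ(G_i) = (m-1)·(n-k) + i·(k − max(|A_1|,…,|A_k|)). In particular, (m-1)·n − min{δ(G_0),…,δ(G_{m-1})} = (m-1)·max(k, |A_1|, …, |A_k|). -/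
open scoped Classical

noncomputable section

/-- Degree of the vertex `v` in the subgraph of the Hamming graph induced on `V`:
the number of vertices of `V` at Hamming distance exactly `1` from `v`. -/
def indDeg {ι α : Type*} [Fintype ι] (V : Finset (ι → α)) (v : ι → α) : ℕ :=
  (V.filter fun w => hammingDist v w = 1).card

/-- Minimum degree `δ` of the subgraph of the Hamming graph induced on `V`
(it is `⊤ = +∞` for the empty graph). -/
def minDeg {ι α : Type*} [Fintype ι] (V : Finset (ι → α)) : ℕ∞ :=
  V.inf fun v => (indDeg V v : ℕ∞)

/-- Maximum degree `Δ` of the subgraph of the Hamming graph induced on `V`. -/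
def maxDeg {ι α : Type*} [Fintype ι] (V : Finset (ι → α)) : ℕ :=
  V.sup fun v => indDeg V v

/-- `Fset m n A i` is the filter `F_i = ↑{A_1^{(i)}, …, A_k^{(i)}}`: the set of vertices
`x ∈ {0,…,m-1}^n` having all entries indexed by some block `A j` at least `i`. -/
def Fset (m n k : ℕ) (A : Fin k → Finset (Fin n)) (i : ℕ) : Finset (Fin n → Fin m) :=
  Finset.univ.filter fun x => ∃ j : Fin k, ∀ a ∈ A j, i ≤ (x a : ℕ)

/-- The parts `G_0 = complement of F_1`, `G_i = F_i \ F_{i+1}` for `1 ≤ i ≤ m-2`, and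
`G_{m-1} = F_{m-1}`. -/
def Gset (m n k : ℕ) (A : Fin k → Finset (Fin n)) (i : ℕ) : Finset (Fin n → Fin m) :=
  if i = 0 then Finset.univ \ Fset m n k A 1
  else if i = m - 1 then Fset m n k A (m - 1)
  else Fset m n k A i \ Fset m n k A (i + 1)

/-- The maximum cardinality `max(|A_1|, …, |A_k|)` of a block of the partition. -/
def maxBlock {n k : ℕ} (A : Fin k → Finset (Fin n)) : ℕ :=
  Finset.univ.sup fun j => (A j).card


/-!
The filters decrease, `F_0` is everything and `F_m` is empty, so the `G_i = F_i \ F_{i+1}`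
partition the vertices. A vertex `x ∈ G_i` has `n (m - 1)` Hamming neighbours `x[a := c]`, and
one outside `G_i` either rises into `F_{i+1}` or falls out of `F_i`. A rise needs `c > i` and
every other entry of the block of `a` above `i`, which happens for at most one `a` per block:
at most `k (m - 1 - i)` such neighbours. A fall needs `c < i` and `a` in a block `A_j`
witnessing `x ∈ F_i`: at most `|A_j| i ≤ max |A_j| · i` of them. The vertex whose block
representatives are `0`, except for `i` in a largest block, and whose other entries are `m - 1`
attains both bounds.
-/

open Finset Function

section HammingDegree

variable {ι α : Type*} [Fintype ι]

lemma indDeg_eq_card [DecidableEq α] (V : Finset (ι → α)) (x : ι → α) :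
    indDeg V x = #{w ∈ V | hammingDist x w = 1} := by
  unfold indDeg
  congr!

lemma hammingDist_eq_one_iff [DecidableEq ι] [DecidableEq α] {x w : ι → α} :
    hammingDist x w = 1 ↔ ∃ a, w a ≠ x a ∧ update x a (w a) = w := by
  simp only [hammingDist, card_eq_one, update_eq_iff, true_and, Finset.ext_iff,
    mem_filter, mem_univ, mem_singleton]
  refine exists_congr fun a => ⟨fun h => ⟨fun he => (h a).2 rfl he.symm, fun b hb => ?_⟩,
    fun ⟨ha, hb⟩ b => ⟨fun hne => ?_, fun hba => hba ▸ Ne.symm ha⟩⟩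
  · by_contra hne
    exact hb ((h b).1 hne)
  · by_contra hba
    exact hne (hb b hba)

lemma indDeg_eq_sum [DecidableEq ι] [Fintype α] [DecidableEq α] (V : Finset (ι → α))
    (x : ι → α) :
    indDeg V x = ∑ a, #{c ∈ univ.erase (x a) | update x a c ∈ V} := by
  have hneigh : {w ∈ V | hammingDist x w = 1} =
      univ.biUnion fun a => {c ∈ univ.erase (x a) | update x a c ∈ V}.image
        (update x a) := by
    ext w
    simp only [mem_filter, hammingDist_eq_one_iff, mem_biUnion, mem_univ, true_and, mem_image,
      mem_erase, and_true]
    constructor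
    · rintro ⟨hw, a, hwa, hupd⟩
      exact ⟨a, w a, ⟨hwa, by rwa [hupd]⟩, hupd⟩
    · rintro ⟨a, c, ⟨hc, hV⟩, rfl⟩
      exact ⟨hV, a, by simpa using hc, by simp⟩
  rw [indDeg_eq_card, hneigh, card_biUnion]
  · exact sum_congr rfl fun a _ => card_image_of_injective _ (update_injective x a)
  · intro a _ b _ hab
    simp only [Function.onFun, disjoint_left, mem_image, mem_filter, mem_erase, not_exists,
      not_and]
    rintro _ ⟨c, ⟨⟨hc, _⟩, _⟩, rfl⟩ d _ hd
    exact hc (by simpa [hab] using (congrFun hd a).symm)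

lemma indDeg_add_sum_card_update_notMem [DecidableEq ι] [Fintype α] [DecidableEq α]
    {V : Finset (ι → α)} {x : ι → α} (hx : x ∈ V) :
    indDeg V x + ∑ a, #{c | update x a c ∉ V} =
      Fintype.card ι * (Fintype.card α - 1) := by
  rw [indDeg_eq_sum, ← sum_add_distrib, ← smul_eq_mul, ← card_univ, ← sum_const]
  refine sum_congr rfl fun a _ => ?_
  have hnot : ({c | update x a c ∉ V} : Finset α) =
      {c ∈ univ.erase (x a) | update x a c ∉ V} := by
    ext c
    simp only [mem_filter, mem_univ, mem_erase, and_true, true_and, iff_and_self]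
    rintro hc rfl
    exact hc (by simpa using hx)
  rw [hnot, card_filter_add_card_filter_not, card_erase_of_mem (mem_univ _), card_univ]

lemma minDeg_eq_indDeg {V : Finset (ι → α)} {x : ι → α} (hx : x ∈ V)
    (hmin : ∀ y ∈ V, indDeg V x ≤ indDeg V y) : minDeg V = indDeg V x :=
  le_antisymm (Finset.inf_le hx) (Finset.le_inf fun y hy => by exact_mod_cast hmin y hy)

end HammingDegree

lemma card_filter_notMem_sdiff {β γ : Type*} [Fintype β] [DecidableEq γ] {F F' : Finset γ}
    (h : F' ⊆ F) (g : β → γ) :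
    #{b | g b ∉ F \ F'} = #{b | g b ∉ F} + #{b | g b ∈ F'} := by
  rw [← card_union_of_disjoint]
  · congr 1
    ext b
    simp only [mem_filter, mem_univ, true_and, mem_union, mem_sdiff, not_and, not_not]
    tauto
  · exact disjoint_filter.2 fun b _ hF hF' => hF (h hF')

lemma existsUnique_lt_of_antitone {P : ℕ → Prop} (hP : Antitone P) {m : ℕ} (h0 : P 0)
    (hm : ¬ P m) : ∃! i, i < m ∧ P i ∧ ¬ P (i + 1) := by
  have hex : ∃ i, ¬ P i := ⟨m, hm⟩
  have hpos : 0 < Nat.find hex := Nat.pos_of_ne_zero fun h => Nat.find_spec hex (h ▸ h0)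
  refine ⟨Nat.find hex - 1, ⟨?_, ?_, ?_⟩, ?_⟩
  · have := Nat.find_min' hex hm
    omega
  · exact not_not.1 (Nat.find_min hex (by omega))
  · simpa [Nat.sub_add_cancel hpos] using Nat.find_spec hex
  · rintro j ⟨-, hj, hj'⟩
    have hle : Nat.find hex ≤ j + 1 := Nat.find_min' hex hj'
    have hge : j + 1 ≤ Nat.find hex := by
      by_contra! hlt
      exact Nat.find_spec hex (hP (by omega) hj)
    omega

section Filters

variable {m n k : ℕ} {A : Fin k → Finset (Fin n)}

lemma mem_Fset_iff {x : Fin n → Fin m} {i : ℕ} :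
    x ∈ Fset m n k A i ↔ ∃ j, ∀ a ∈ A j, i ≤ (x a : ℕ) := by
  simp [Fset]

lemma Fset_antitone : Antitone (Fset m n k A) := fun _ _ hij _ hx => by
  obtain ⟨j, hj⟩ := mem_Fset_iff.1 hx
  exact mem_Fset_iff.2 ⟨j, fun a ha => hij.trans (hj a ha)⟩

lemma Fset_zero [NeZero k] : Fset m n k A 0 = univ :=
  eq_univ_of_forall fun _ => mem_Fset_iff.2 ⟨0, fun _ _ => Nat.zero_le _⟩

lemma Fset_eq_empty (hA : ∀ j, (A j).Nonempty) {i : ℕ} (hi : m ≤ i) : Fset m n k A i = ∅ :=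
  eq_empty_of_forall_notMem fun x hx => by
    obtain ⟨j, hj⟩ := mem_Fset_iff.1 hx
    obtain ⟨a, ha⟩ := hA j
    have := (x a).isLt
    have := hj a ha
    omega

lemma Gset_eq_sdiff [NeZero k] (hA : ∀ j, (A j).Nonempty) (i : ℕ) :
    Gset m n k A i = Fset m n k A i \ Fset m n k A (i + 1) := by
  unfold Gset
  split_ifs with h0 hlast
  · rw [h0, Fset_zero]
  · rw [Fset_eq_empty hA (by omega : m ≤ i + 1), sdiff_empty, hlast]
  · rfl

lemma existsUnique_mem_Gset [NeZero k] (hA : ∀ j, (A j).Nonempty) (x : Fin n → Fin m) :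
    ∃! i : ℕ, i < m ∧ x ∈ Gset m n k A i := by
  simp only [Gset_eq_sdiff hA, mem_sdiff]
  exact existsUnique_lt_of_antitone (P := (x ∈ Fset m n k A ·))
    (fun _ _ h hx => Fset_antitone h hx) (by simp [Fset_zero]) (by simp [Fset_eq_empty hA le_rfl])

end Filters

section Partition

variable {ι κ : Type*} {A : κ → Finset ι}

lemma eq_of_mem_of_mem (hdisj : ∀ i j : κ, i ≠ j → Disjoint (A i) (A j)) {a : ι} {j j' : κ}
    (h : a ∈ A j) (h' : a ∈ A j') : j = j' := by
  by_contra hne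
  exact disjoint_left.1 (hdisj j j' hne) h h'

lemma injective_of_forall_mem (hdisj : ∀ i j : κ, i ≠ j → Disjoint (A i) (A j)) {r : κ → ι}
    (hr : ∀ j, r j ∈ A j) : Injective r := fun j j' h =>
  eq_of_mem_of_mem hdisj (hr j) (h ▸ hr j')

lemma card_le_card_of_disjoint_nonempty [Fintype ι] [Fintype κ] (hA : ∀ j, (A j).Nonempty)
    (hdisj : ∀ i j : κ, i ≠ j → Disjoint (A i) (A j)) : Fintype.card κ ≤ Fintype.card ι := by
  choose r hr using hA
  exact Fintype.card_le_of_injective r (injective_of_forall_mem hdisj hr)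

lemma sum_eq_sum_sum_blocks [Fintype ι] [Fintype κ] [DecidableEq ι]
    (hdisj : ∀ i j : κ, i ≠ j → Disjoint (A i) (A j)) (hcover : univ.biUnion A = univ)
    {M : Type*} [AddCommMonoid M] (f : ι → M) :
    ∑ a, f a = ∑ j, ∑ a ∈ A j, f a := by
  rw [← sum_biUnion fun i _ j _ hij => hdisj i j hij, hcover]

end Partition

section Degree

variable {m n k : ℕ} {A : Fin k → Finset (Fin n)} {x : Fin n → Fin m} {i : Fin m}

lemma indDeg_add_sum_card_update_Fset (hx : x ∈ Fset m n k A i \ Fset m n k A (i + 1)) :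
    indDeg (Fset m n k A i \ Fset m n k A (i + 1)) x +
        (∑ a, #{c | update x a c ∉ Fset m n k A i} +
          ∑ a, #{c | update x a c ∈ Fset m n k A (i + 1)}) = n * (m - 1) := by
  have hsub : Fset m n k A (i + 1) ⊆ Fset m n k A i := Fset_antitone (Nat.le_succ _)
  have h := indDeg_add_sum_card_update_notMem hx
  rw [Fintype.card_fin, Fintype.card_fin] at h
  rw [← h, ← sum_add_distrib]
  congr 1
  refine sum_congr rfl fun a _ => ?_
  exact (card_filter_notMem_sdiff hsub _).symm

lemma lt_of_update_mem_Fset_succ (hdisj : ∀ i j : Fin k, i ≠ j → Disjoint (A i) (A j))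
    (hx : x ∉ Fset m n k A (i + 1)) {a : Fin n} {c : Fin m}
    (hu : update x a c ∈ Fset m n k A (i + 1)) {j : Fin k} (ha : a ∈ A j) :
    i < c ∧ ∀ b ∈ A j, b ≠ a → i < x b := by
  obtain ⟨j', hj'⟩ := mem_Fset_iff.1 hu
  have ha' : a ∈ A j' := by
    by_contra ha'
    refine hx (mem_Fset_iff.2 ⟨j', fun b hb => ?_⟩)
    simpa [update_of_ne (ne_of_mem_of_not_mem hb ha')] using hj' b hb
  obtain rfl := eq_of_mem_of_mem hdisj ha ha'
  refine ⟨by simpa using hj' a ha, fun b hb hba => ?_⟩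
  simpa [update_of_ne hba] using hj' b hb

lemma sum_card_update_mem_Fset_succ_le (hdisj : ∀ i j : Fin k, i ≠ j → Disjoint (A i) (A j))
    (hcover : univ.biUnion A = univ) (hx : x ∉ Fset m n k A (i + 1)) :
    ∑ a, #{c | update x a c ∈ Fset m n k A (i + 1)} ≤ k * (m - 1 - i) := by
  set f := fun a => #{c | update x a c ∈ Fset m n k A (i + 1)}
  have hf : ∀ a, f a ≤ m - 1 - i := fun a => by
    obtain ⟨j, -, ha⟩ := mem_biUnion.1 (hcover ▸ mem_univ a)
    refine (card_le_card fun c hc => ?_).trans_eq (Fin.card_Ioi i)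
    simpa using (lt_of_update_mem_Fset_succ hdisj hx (mem_filter.1 hc).2 ha).1
  -- two coordinates of one block that can both be raised would put `x` itself in `F (i + 1)`
  have hblock : ∀ j, #{a ∈ A j | f a ≠ 0} ≤ 1 := fun j => by
    refine card_le_one.2 fun a ha a' ha' => ?_
    by_contra hne
    simp only [mem_filter, f, ne_eq, card_eq_zero, filter_eq_empty_iff, not_forall,
      not_not] at ha ha'
    obtain ⟨⟨ha, c, -, hc⟩, ⟨ha', c', -, hc'⟩⟩ := And.intro ha ha'
    refine hx (mem_Fset_iff.2 ⟨j, fun b hb => ?_⟩)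
    rcases eq_or_ne b a with rfl | hba
    · exact (lt_of_update_mem_Fset_succ hdisj hx hc' ha').2 b hb hne
    · exact (lt_of_update_mem_Fset_succ hdisj hx hc ha).2 b hb hba
  calc ∑ a, f a = ∑ j, ∑ a ∈ A j with f a ≠ 0, f a := by
        simp only [sum_filter_ne_zero, sum_eq_sum_sum_blocks hdisj hcover f]
    _ ≤ ∑ j : Fin k, #{a ∈ A j | f a ≠ 0} * (m - 1 - i) :=
        sum_le_sum fun j _ => by simpa using sum_le_card_nsmul _ _ _ fun a _ => hf a
    _ ≤ ∑ j : Fin k, (m - 1 - i) :=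
        sum_le_sum fun j _ => by simpa using Nat.mul_le_mul_right (m - 1 - i) (hblock j)
    _ = k * (m - 1 - i) := by simp

lemma sum_card_update_notMem_Fset_le (hx : x ∈ Fset m n k A i) :
    ∑ a, #{c | update x a c ∉ Fset m n k A i} ≤ maxBlock A * i := by
  obtain ⟨j, hj⟩ := mem_Fset_iff.1 hx
  -- lowering a coordinate outside the witness block `A j`, or not below `i`, keeps `j` a witness
  have hterm (a : Fin n) :
      #{c | update x a c ∉ Fset m n k A i} ≤ if a ∈ A j then (i : ℕ) else 0 := by
    have hlt : ∀ c, update x a c ∉ Fset m n k A i → a ∈ A j ∧ c < i := by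
      intro c hc
      by_contra! h
      refine hc (mem_Fset_iff.2 ⟨j, fun b hb => ?_⟩)
      rcases eq_or_ne b a with rfl | hba
      · simpa using h hb
      · simpa [update_of_ne hba] using hj b hb
    split_ifs with ha
    · refine (card_le_card fun c hc => ?_).trans_eq (Fin.card_Iio i)
      simpa using (hlt c (mem_filter.1 hc).2).2
    · exact card_eq_zero.2 (filter_eq_empty_iff.2 fun c _ hc => ha (hlt c hc).1) |>.le
  calc ∑ a, #{c | update x a c ∉ Fset m n k A i}
      ≤ ∑ a, if a ∈ A j then (i : ℕ) else 0 := sum_le_sum fun a _ => hterm a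
    _ = #(A j) * i := by simp [sum_ite_mem]
    _ ≤ maxBlock A * i := Nat.mul_le_mul_right _ (le_sup (f := fun j => #(A j)) (mem_univ j))

lemma le_indDeg_add_of_mem (hdisj : ∀ i j : Fin k, i ≠ j → Disjoint (A i) (A j))
    (hcover : univ.biUnion A = univ) (hx : x ∈ Fset m n k A i \ Fset m n k A (i + 1)) :
    n * (m - 1) ≤
      indDeg (Fset m n k A i \ Fset m n k A (i + 1)) x + (maxBlock A * i + k * (m - 1 - i)) := by
  rw [← indDeg_add_sum_card_update_Fset hx]
  have hD := sum_card_update_notMem_Fset_le (mem_sdiff.1 hx).1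
  have hU := sum_card_update_mem_Fset_succ_le hdisj hcover (mem_sdiff.1 hx).2
  omega

end Degree

section PeakVertex

variable {m n k : ℕ} {A : Fin k → Finset (Fin n)} {r : Fin k → Fin n} {J j : Fin k}
  {i : Fin m}

/-- Every block has a single low entry `r j`: raising it above `i` lifts the vertex into
`F (i + 1)`, and lowering any entry of `A J` below `i` drops it out of `F i`, so both neighbour
bounds are attained. -/
def peakVertex (r : Fin k → Fin n) (J : Fin k) (i : Fin m) : Fin n → Fin m := fun a =>
  if a = r J then i
  else if a ∈ Set.range r then ⟨0, i.pos⟩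
  else ⟨m - 1, Nat.sub_one_lt_of_lt i.isLt⟩

lemma peakVertex_apply_of_ne (hdisj : ∀ i j : Fin k, i ≠ j → Disjoint (A i) (A j))
    (hr : ∀ j, r j ∈ A j) {a : Fin n} (ha : a ∈ A j) (hne : a ≠ r j) :
    (peakVertex r J i a : ℕ) = m - 1 := by
  have hrange : a ∉ Set.range r := by
    rintro ⟨j', rfl⟩
    exact hne (by rw [eq_of_mem_of_mem hdisj (hr j') ha])
  have hJ : a ≠ r J := fun h => hrange ⟨J, h.symm⟩
  simp [peakVertex, hJ, hrange]

lemma peakVertex_apply_rep_of_ne (hdisj : ∀ i j : Fin k, i ≠ j → Disjoint (A i) (A j))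
    (hr : ∀ j, r j ∈ A j) (hj : j ≠ J) : (peakVertex r J i (r j) : ℕ) = 0 := by
  simp [peakVertex, (injective_of_forall_mem hdisj hr).ne hj]

lemma peakVertex_mem (hdisj : ∀ i j : Fin k, i ≠ j → Disjoint (A i) (A j))
    (hr : ∀ j, r j ∈ A j) : peakVertex r J i ∈ Fset m n k A i \ Fset m n k A (i + 1) := by
  refine mem_sdiff.2 ⟨mem_Fset_iff.2 ⟨J, fun b hb => ?_⟩, fun h => ?_⟩
  · rcases eq_or_ne b (r J) with rfl | hne
    · simp [peakVertex]
    · rw [peakVertex_apply_of_ne hdisj hr hb hne]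
      have := i.isLt
      omega
  · obtain ⟨j, hj⟩ := mem_Fset_iff.1 h
    have := hj (r j) (hr j)
    rcases eq_or_ne j J with rfl | hjJ
    · simp [peakVertex] at this
    · rw [peakVertex_apply_rep_of_ne hdisj hr hjJ] at this
      omega

lemma le_card_update_peakVertex_mem (hdisj : ∀ i j : Fin k, i ≠ j → Disjoint (A i) (A j))
    (hr : ∀ j, r j ∈ A j) (j : Fin k) :
    m - 1 - i ≤ #{c | update (peakVertex r J i) (r j) c ∈ Fset m n k A (i + 1)} := by
  refine (Fin.card_Ioi i).symm.trans_le (card_le_card fun c hc => ?_)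
  refine mem_filter.2 ⟨mem_univ c, mem_Fset_iff.2 ⟨j, fun b hb => ?_⟩⟩
  have hic : i < c := by simpa using hc
  rcases eq_or_ne b (r j) with rfl | hne
  · simpa using hic
  · rw [update_of_ne hne, peakVertex_apply_of_ne hdisj hr hb hne]
    have := c.isLt
    omega

lemma le_card_update_peakVertex_notMem (hdisj : ∀ i j : Fin k, i ≠ j → Disjoint (A i) (A j))
    (hr : ∀ j, r j ∈ A j) {a : Fin n} (ha : a ∈ A J) :
    (i : ℕ) ≤ #{c | update (peakVertex r J i) a c ∉ Fset m n k A i} := by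
  refine (Fin.card_Iio i).symm.trans_le (card_le_card fun c hc => ?_)
  refine mem_filter.2 ⟨mem_univ c, fun h => ?_⟩
  have hci : c < i := by simpa using hc
  obtain ⟨j, hj⟩ := mem_Fset_iff.1 h
  rcases eq_or_ne j J with rfl | hjJ
  · have := hj a ha
    simp only [update_self] at this
    exact absurd hci (not_lt.2 this)
  · have hne : r j ≠ a := fun h => hjJ (eq_of_mem_of_mem hdisj (hr j) (h ▸ ha))
    have := hj (r j) (hr j)
    rw [update_of_ne hne, peakVertex_apply_rep_of_ne hdisj hr hjJ] at this
    rw [Fin.lt_def] at hci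
    omega

lemma indDeg_peakVertex_add_le (hdisj : ∀ i j : Fin k, i ≠ j → Disjoint (A i) (A j))
    (hr : ∀ j, r j ∈ A j) :
    indDeg (Fset m n k A i \ Fset m n k A (i + 1)) (peakVertex r J i) +
      (#(A J) * i + k * (m - 1 - i)) ≤ n * (m - 1) := by
  rw [← indDeg_add_sum_card_update_Fset (peakVertex_mem hdisj hr)]
  refine Nat.add_le_add_left (Nat.add_le_add ?_ ?_) _
  · calc #(A J) * (i : ℕ) = ∑ a ∈ A J, (i : ℕ) := by simp
      _ ≤ ∑ a ∈ A J, #{c | update (peakVertex r J i) a c ∉ Fset m n k A i} :=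
        sum_le_sum fun a ha => le_card_update_peakVertex_notMem hdisj hr ha
      _ ≤ _ := sum_le_sum_of_subset (subset_univ _)
  · calc k * (m - 1 - i) = ∑ j : Fin k, (m - 1 - i) := by simp
      _ ≤ ∑ j, #{c | update (peakVertex r J i) (r j) c ∈ Fset m n k A (i + 1)} :=
        sum_le_sum fun j _ => le_card_update_peakVertex_mem hdisj hr j
      _ = ∑ a ∈ univ.image r,
            #{c | update (peakVertex r J i) a c ∈ Fset m n k A (i + 1)} := by
        rw [sum_image fun j _ j' _ h => injective_of_forall_mem hdisj hr h]
      _ ≤ _ := sum_le_sum_of_subset (subset_univ _)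

end PeakVertex

section MinDegree

variable {m n k : ℕ} {A : Fin k → Finset (Fin n)}

lemma maxBlock_le : maxBlock A ≤ n :=
  Finset.sup_le fun j _ => (card_le_univ (A j)).trans_eq (Fintype.card_fin n)

theorem minDeg_Fset_sdiff [NeZero k] (hA : ∀ j, (A j).Nonempty)
    (hdisj : ∀ i j : Fin k, i ≠ j → Disjoint (A i) (A j)) (hcover : univ.biUnion A = univ)
    (i : Fin m) :
    minDeg (Fset m n k A i \ Fset m n k A (i + 1)) =
      ((m - 1 - i) * (n - k) + i * (n - maxBlock A) : ℕ) := by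
  have hkn : k ≤ n := by simpa using card_le_card_of_disjoint_nonempty hA hdisj
  have hBn : maxBlock A ≤ n := maxBlock_le
  choose r hr using hA
  obtain ⟨J, -, hJ⟩ := exists_max_image univ (fun j => #(A j)) univ_nonempty
  have hB : maxBlock A = #(A J) :=
    le_antisymm (Finset.sup_le fun j _ => hJ j (mem_univ j))
      (le_sup (f := fun j => #(A j)) (mem_univ J))
  have hmem : peakVertex r J i ∈ Fset m n k A i \ Fset m n k A (i + 1) := peakVertex_mem hdisj hr
  have hpeak := indDeg_peakVertex_add_le (J := J) (i := i) hdisj hr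
  rw [← hB] at hpeak
  have hlow := le_indDeg_add_of_mem hdisj hcover hmem
  rw [minDeg_eq_indDeg hmem fun y hy => by
    have := le_indDeg_add_of_mem hdisj hcover hy
    omega]
  have hi : (i : ℕ) ≤ m - 1 := Nat.le_sub_one_of_lt i.isLt
  norm_cast
  zify [hkn, hBn, hi] at hpeak hlow ⊢
  linarith

theorem minDeg_Gset [NeZero k] (hA : ∀ j, (A j).Nonempty)
    (hdisj : ∀ i j : Fin k, i ≠ j → Disjoint (A i) (A j)) (hcover : univ.biUnion A = univ)
    {i : ℕ} (hi : i < m) :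
    minDeg (Gset m n k A i) = ((m - 1 - i) * (n - k) + i * (n - maxBlock A) : ℕ) := by
  rw [Gset_eq_sdiff hA]
  exact minDeg_Fset_sdiff hA hdisj hcover ⟨i, hi⟩

-- the degree is linear in `i`, so the minimum is taken at `i = 0` or at `i = m - 1`
theorem inf_range_minDeg_Gset [NeZero k] (hA : ∀ j, (A j).Nonempty)
    (hdisj : ∀ i j : Fin k, i ≠ j → Disjoint (A i) (A j)) (hcover : univ.biUnion A = univ)
    (hm : 0 < m) :
    (range m).inf (fun i => minDeg (Gset m n k A i)) =
      ((m - 1) * (n - max k (maxBlock A)) : ℕ) := by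
  refine le_antisymm ?_ (Finset.le_inf fun i hi => ?_)
  · rcases le_total (maxBlock A) k with h | h
    · refine (Finset.inf_le (mem_range.2 hm)).trans_eq ?_
      rw [minDeg_Gset hA hdisj hcover hm, max_eq_left h]
      simp
    · refine (Finset.inf_le (mem_range.2 (Nat.sub_one_lt_of_lt hm))).trans_eq ?_
      rw [minDeg_Gset hA hdisj hcover (Nat.sub_one_lt_of_lt hm), max_eq_right h]
      simp
  · have hi := mem_range.1 hi
    rw [minDeg_Gset hA hdisj hcover hi, Nat.cast_le]
    calc (m - 1) * (n - max k (maxBlock A))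
        = (m - 1 - i) * (n - max k (maxBlock A)) + i * (n - max k (maxBlock A)) := by
          rw [← add_mul, Nat.sub_add_cancel (Nat.le_sub_one_of_lt hi)]
      _ ≤ (m - 1 - i) * (n - k) + i * (n - maxBlock A) := by gcongr <;> omega

end MinDegree

theorem stmt11 (m n k : ℕ) (hm : 2 ≤ m) (hn : 2 ≤ n)
    (A : Fin k → Finset (Fin n))
    (hA : ∀ j, (A j).Nonempty)
    (hdisj : ∀ i j : Fin k, i ≠ j → Disjoint (A i) (A j))
    (hcover : Finset.univ.biUnion A = (Finset.univ : Finset (Fin n))) :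
    (∀ x : Fin n → Fin m, ∃! i : ℕ, i < m ∧ x ∈ Gset m n k A i) ∧
    (∀ i < m, minDeg (Gset m n k A i) ≠ ⊤ ∧
        ((minDeg (Gset m n k A i)).toNat : ℤ) =
          ((m : ℤ) - 1) * ((n : ℤ) - (k : ℤ)) +
            (i : ℤ) * ((k : ℤ) - (maxBlock A : ℤ))) ∧
    ((((m - 1) * n : ℕ) : ℕ∞) -
        (Finset.range m).inf (fun i => minDeg (Gset m n k A i)) =
      (((m - 1) * max k (maxBlock A) : ℕ) : ℕ∞)) := by
  have : NeZero k := ⟨by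
    rintro rfl
    simpa using (hcover ▸ mem_univ (⟨0, by omega⟩ : Fin n) : _ ∈ univ.biUnion A)⟩
  have hkn : k ≤ n := by simpa using card_le_card_of_disjoint_nonempty hA hdisj
  have hBn : maxBlock A ≤ n := maxBlock_le
  refine ⟨existsUnique_mem_Gset hA, fun i hi => ?_, ?_⟩
  · rw [minDeg_Gset hA hdisj hcover hi, ENat.toNat_natCast]
    refine ⟨ENat.natCast_ne_top _, ?_⟩
    push_cast [Nat.cast_sub hkn, Nat.cast_sub hBn, Nat.cast_sub (Nat.le_sub_one_of_lt hi),
      Nat.cast_sub (show 1 ≤ m by omega)]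
    ring
  · rw [inf_range_minDeg_Gset hA hdisj hcover (by omega), ← ENat.natCast_sub, Nat.mul_sub,
      Nat.sub_sub_self (Nat.mul_le_mul_left _ (max_le hkn hBn))]
end
end

section
/- Let m, ℓ ≥ 2 and s ∈ ℤ, and set H_s^ℓ = |{(x_1,…,x_ℓ) ∈ {0,1,…,m-2}^ℓ : x_1 + ⋯ + x_ℓ ≡ s (mod m)}|. Then: if ℓ is even and s + ℓ ≢ 0 (mod m), H_s^ℓ = (Σ_{i=0}^{(ℓ-2)/2} (m-1)^{2i})·(m-2); if ℓ is even and s + ℓ ≡ 0 (mod m), H_s^ℓ = (Σ_{i=0}^{(ℓ-2)/2} (m-1)^{2i})·(m-2) + 1; if ℓ is odd and s + ℓ ≢ 0 (mod m), H_s^ℓ = (Σ_{i=0}^{(ℓ-3)/2} (m-1)^{2i+1})·(m-2) + 1; if ℓ is odd and s + ℓ ≡ 0 (mod m), H_s^ℓ = (Σ_{i=0}^{(ℓ-3)/2} (m-1)^{2i+1})·(m-2). -/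
open scoped Classical

noncomputable section

/-- `Hcount m ℓ s` is the number of tuples `(x_1,…,x_ℓ) ∈ {0,…,m-2}^ℓ` whose entries
sum to `s` modulo `m`. -/
def Hcount (m ℓ : ℕ) (s : ℤ) : ℕ :=
  (Finset.univ.filter fun x : Fin ℓ → Fin (m - 1) =>
    Int.ModEq (m : ℤ) (∑ i, ((x i : ℕ) : ℤ)) s).card

lemma eq_of_lt_modeq (m a b : ℕ) (ha : a < m) (hb : b < m)
    (h : Int.ModEq (m : ℤ) a b) : a = b := by
  have h1 : (a : ℤ) % m = a := Int.emod_eq_of_lt (by positivity) (by exact_mod_cast ha)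
  have h2 : (b : ℤ) % m = b := Int.emod_eq_of_lt (by positivity) (by exact_mod_cast hb)
  have h3 := h
  unfold Int.ModEq at h3
  rw [h1, h2] at h3
  exact_mod_cast h3

lemma hrec (m ℓ : ℕ) (hm : 2 ≤ m) (s : ℤ) :
    Hcount m (ℓ+1) s + Hcount m ℓ (s+1) = (m-1)^ℓ := by
  classical
  have hcard : Hcount m (ℓ+1) s =
      (Finset.univ.filter fun x : Fin ℓ → Fin (m - 1) =>
        ¬ Int.ModEq (m : ℤ) (∑ i, ((x i : ℕ) : ℤ)) (s+1)).card := by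
    unfold Hcount
    apply Finset.card_bij (fun y _ => Fin.init y)
    · intro y hy
      simp only [Finset.mem_filter, Finset.mem_univ, true_and] at hy ⊢
      intro hq
      have hsum : (∑ i, ((y i : ℕ) : ℤ)) =
          (∑ i : Fin ℓ, ((Fin.init y i : ℕ) : ℤ)) + ((y (Fin.last ℓ) : ℕ) : ℤ) := by
        rw [Fin.sum_univ_castSucc]
        rfl
      have h1 : Int.ModEq (m:ℤ) ((∑ i : Fin ℓ, ((Fin.init y i : ℕ) : ℤ)) + ((y (Fin.last ℓ) : ℕ) : ℤ)) s := hsum ▸ hy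
      have h2 : Int.ModEq (m:ℤ) (s + 1 + ((y (Fin.last ℓ) : ℕ) : ℤ)) s :=
        ((hq.add_right _).symm.trans h1)
      have h3 : (m:ℤ) ∣ (((y (Fin.last ℓ) : ℕ) : ℤ) + 1) := by
        have hd := h2.dvd
        rw [show s - (s + 1 + ((y (Fin.last ℓ) : ℕ) : ℤ)) = -((((y (Fin.last ℓ) : ℕ) : ℤ)) + 1) by ring] at hd
        exact dvd_neg.mp hd
      have hlt : ((y (Fin.last ℓ) : ℕ) : ℤ) + 1 < m := by
        have := (y (Fin.last ℓ)).isLt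
        omega
      have hpos : (0:ℤ) < ((y (Fin.last ℓ) : ℕ) : ℤ) + 1 := by positivity
      have := Int.le_of_dvd hpos h3
      omega
    · intro y hy y' hy' hh
      simp only [Finset.mem_filter, Finset.mem_univ, true_and] at hy hy'
      have hsum : ∀ z : Fin (ℓ+1) → Fin (m-1), (∑ i, ((z i : ℕ) : ℤ)) =
          (∑ i : Fin ℓ, ((Fin.init z i : ℕ) : ℤ)) + ((z (Fin.last ℓ) : ℕ) : ℤ) := by
        intro z; rw [Fin.sum_univ_castSucc]; rfl
      have hlast : (y (Fin.last ℓ) : ℕ) = (y' (Fin.last ℓ) : ℕ) := by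
        apply eq_of_lt_modeq m _ _ (by have := (y (Fin.last ℓ)).isLt; omega)
          (by have := (y' (Fin.last ℓ)).isLt; omega)
        have h1 := hy.trans hy'.symm
        rw [hsum y, hsum y', hh] at h1
        exact (Int.ModEq.add_left_cancel' _ h1)
      have hy0 : y = Fin.snoc (Fin.init y) (y (Fin.last ℓ)) := (Fin.snoc_init_self y).symm
      rw [hy0, hh, Fin.ext hlast, Fin.snoc_init_self]
    · intro x hx
      simp only [Finset.mem_filter, Finset.mem_univ, true_and] at hx
      set T : ℤ := ∑ i : Fin ℓ, ((x i : ℕ) : ℤ) with hT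
      set r : ℤ := (s - T) % m with hr
      have hm0 : (0:ℤ) < m := by exact_mod_cast (by omega : 0 < m)
      have hr0 : 0 ≤ r := Int.emod_nonneg _ (by omega)
      have hrm : r < m := Int.emod_lt_of_pos _ hm0
      have hrne : r ≠ (m:ℤ) - 1 := by
        intro hcon
        apply hx
        have hme : Int.ModEq (m:ℤ) (s - T) r := (Int.mod_modEq _ _).symm
        rw [hcon] at hme
        have hm1 : Int.ModEq (m:ℤ) ((m:ℤ)-1) (-1) :=
          Int.modEq_iff_dvd.mpr ⟨-1, by ring⟩
        have h2 : Int.ModEq (m:ℤ) (s - T) (-1) := hme.trans hm1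
        have h5 := h2.add_right (T + 1)
        rw [show s - T + (T + 1) = s + 1 by ring, show (-1:ℤ) + (T+1) = T by ring] at h5
        exact h5.symm
      have hrlt : r.toNat < m - 1 := by omega
      refine ⟨Fin.snoc x ⟨r.toNat, hrlt⟩, ?_, ?_⟩
      · simp only [Finset.mem_filter, Finset.mem_univ, true_and]
        have hsum : (∑ i, (((Fin.snoc x ⟨r.toNat, hrlt⟩ : Fin (ℓ+1) → Fin (m-1)) i : ℕ) : ℤ)) = T + r := by
          rw [Fin.sum_univ_castSucc]
          simp [Fin.snoc, hT]
          omega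
        rw [hsum]
        have hme : Int.ModEq (m:ℤ) r (s - T) := Int.mod_modEq _ _
        have := hme.add_left T
        simpa using this
      · simp [Fin.init_snoc]
  rw [hcard]
  unfold Hcount
  rw [add_comm]
  rw [Finset.card_filter_add_card_filter_not]
  simp [Finset.card_univ]

lemma I1 (n k : ℕ) :
    (∑ i ∈ Finset.range k, (n+1)^(2*i+1)) * n +
      ((∑ i ∈ Finset.range k, (n+1)^(2*i)) * n + 1) = (n+1)^(2*k) := by
  induction k with
  | zero => simp
  | succ k ih =>
    rw [Finset.sum_range_succ, Finset.sum_range_succ]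
    zify at ih ⊢
    linear_combination ih

lemma I2 (n k : ℕ) :
    (∑ i ∈ Finset.range (k+1), (n+1)^(2*i)) * n +
      ((∑ i ∈ Finset.range k, (n+1)^(2*i+1)) * n + 1) = (n+1)^(2*k+1) := by
  induction k with
  | zero => simp
  | succ k ih =>
    rw [Finset.sum_range_succ] at ih
    rw [Finset.sum_range_succ, Finset.sum_range_succ, Finset.sum_range_succ]
    zify at ih ⊢
    linear_combination ih

lemma key (n : ℕ) : ∀ ℓ : ℕ, ∀ s : ℤ,
    Hcount (n+2) ℓ s =
      if Even ℓ then
        (∑ i ∈ Finset.range (ℓ/2), (n+1)^(2*i)) * n +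
          (if ((n+2:ℕ):ℤ) ∣ (s + (ℓ:ℤ)) then 1 else 0)
      else
        (∑ i ∈ Finset.range (ℓ/2), (n+1)^(2*i+1)) * n +
          (if ((n+2:ℕ):ℤ) ∣ (s + (ℓ:ℤ)) then 0 else 1) := by
  intro ℓ
  induction ℓ with
  | zero =>
    intro s
    have hset : (Finset.univ.filter fun x : Fin 0 → Fin (n+2-1) =>
        Int.ModEq ((n+2:ℕ):ℤ) (∑ i, ((x i : ℕ) : ℤ)) s) =
        if ((n+2:ℕ):ℤ) ∣ s then Finset.univ else ∅ := by
      split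
      · ext x
        simp only [Finset.mem_filter, Finset.mem_univ, true_and, iff_true]
        rw [show (∑ i, ((x i : ℕ) : ℤ)) = 0 by simp]
        exact (Int.modEq_iff_dvd.mpr (by simpa using ‹_›))
      · ext x
        simp only [Finset.mem_filter, Finset.mem_univ, true_and, Finset.notMem_empty, iff_false]
        intro h
        rw [show (∑ i, ((x i : ℕ) : ℤ)) = 0 by simp] at h
        exact ‹¬ _› (by simpa using Int.modEq_iff_dvd.mp h)
    unfold Hcount
    rw [hset]
    split <;> simp_all
  | succ ℓ ih =>
    intro s
    have hr := hrec (n+2) ℓ (by omega) s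
    rw [show (n+2-1) = n+1 by omega] at hr
    rw [ih (s+1)] at hr
    rw [show ((s+1) + (ℓ:ℤ)) = s + ((ℓ+1 : ℕ):ℤ) by push_cast; ring] at hr
    rcases Nat.even_or_odd ℓ with he | ho
    · obtain ⟨c, hc⟩ := he
      obtain ⟨k, rfl⟩ : ∃ k, ℓ = 2*k := ⟨c, by omega⟩
      rw [if_pos (by exact ⟨k, by ring⟩ : Even (2*k))] at hr
      rw [if_neg (by simp [Nat.even_add_one] : ¬ Even (2*k+1))]
      rw [show (2*k)/2 = k by omega] at hr
      rw [show (2*k+1)/2 = k by omega]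
      have hI := I1 n k
      set A := (∑ i ∈ Finset.range k, (n+1)^(2*i+1)) * n with hA
      set B := (∑ i ∈ Finset.range k, (n+1)^(2*i)) * n with hB
      set P := (n+1)^(2*k) with hP
      by_cases hd : ((n+2:ℕ):ℤ) ∣ (s + ((2*k+1 : ℕ):ℤ))
      · rw [if_pos hd] at hr ⊢; omega
      · rw [if_neg hd] at hr ⊢; omega
    · obtain ⟨c, hc⟩ := ho
      obtain ⟨k, rfl⟩ : ∃ k, ℓ = 2*k+1 := ⟨c, by omega⟩
      rw [if_neg (by simp [Nat.even_add_one] : ¬ Even (2*k+1))] at hr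
      rw [if_pos (by exact ⟨k+1, by ring⟩ : Even (2*k+1+1))]
      rw [show (2*k+1)/2 = k by omega] at hr
      rw [show (2*k+1+1)/2 = k+1 by omega]
      have hI := I2 n k
      set A := (∑ i ∈ Finset.range k, (n+1)^(2*i+1)) * n with hA
      set B := (∑ i ∈ Finset.range (k+1), (n+1)^(2*i)) * n with hB
      set P := (n+1)^(2*k+1) with hP
      by_cases hd : ((n+2:ℕ):ℤ) ∣ (s + ((2*k+1+1 : ℕ):ℤ))
      · rw [if_pos hd] at hr ⊢; omega
      · rw [if_neg hd] at hr ⊢; omega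

theorem stmt12 (m ℓ : ℕ) (hm : 2 ≤ m) (hl : 2 ≤ ℓ) (s : ℤ) :
    (Even ℓ → ¬ Int.ModEq (m : ℤ) (s + (ℓ : ℤ)) 0 →
      Hcount m ℓ s = (∑ i ∈ Finset.range ((ℓ - 2) / 2 + 1), (m - 1) ^ (2 * i)) * (m - 2)) ∧
    (Even ℓ → Int.ModEq (m : ℤ) (s + (ℓ : ℤ)) 0 →
      Hcount m ℓ s =
        (∑ i ∈ Finset.range ((ℓ - 2) / 2 + 1), (m - 1) ^ (2 * i)) * (m - 2) + 1) ∧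
    (Odd ℓ → ¬ Int.ModEq (m : ℤ) (s + (ℓ : ℤ)) 0 →
      Hcount m ℓ s =
        (∑ i ∈ Finset.range ((ℓ - 3) / 2 + 1), (m - 1) ^ (2 * i + 1)) * (m - 2) + 1) ∧
    (Odd ℓ → Int.ModEq (m : ℤ) (s + (ℓ : ℤ)) 0 →
      Hcount m ℓ s =
        (∑ i ∈ Finset.range ((ℓ - 3) / 2 + 1), (m - 1) ^ (2 * i + 1)) * (m - 2)) := by
  obtain ⟨n, rfl⟩ : ∃ n, m = n + 2 := ⟨m - 2, by omega⟩
  have hK := key n ℓ s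
  have hdvd : Int.ModEq ((n+2:ℕ):ℤ) (s + (ℓ:ℤ)) 0 ↔ ((n+2:ℕ):ℤ) ∣ (s + (ℓ:ℤ)) :=
    Int.modEq_zero_iff_dvd
  have hm1 : (n+2) - 1 = n + 1 := by omega
  have hm2 : (n+2) - 2 = n := by omega
  refine ⟨?_, ?_, ?_, ?_⟩
  · intro he hnd
    obtain ⟨c, hc⟩ := he
    rw [if_pos ⟨c, hc⟩, if_neg (fun h => hnd (hdvd.mpr h))] at hK
    rw [hK, hm1, hm2, show (ℓ-2)/2 + 1 = ℓ/2 by omega]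
    ring
  · intro he hd
    obtain ⟨c, hc⟩ := he
    rw [if_pos ⟨c, hc⟩, if_pos (hdvd.mp hd)] at hK
    rw [hK, hm1, hm2, show (ℓ-2)/2 + 1 = ℓ/2 by omega]
  · intro ho hnd
    obtain ⟨c, hc⟩ := ho
    rw [if_neg (by simp [hc, Nat.even_add_one, parity_simps] : ¬ Even ℓ),
      if_neg (fun h => hnd (hdvd.mpr h))] at hK
    rw [hK, hm1, hm2, show (ℓ-3)/2 + 1 = ℓ/2 by omega]
  · intro ho hd
    obtain ⟨c, hc⟩ := ho
    rw [if_neg (by simp [hc, Nat.even_add_one, parity_simps] : ¬ Even ℓ),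
      if_pos (hdvd.mp hd)] at hK
    rw [hK, hm1, hm2, show (ℓ-3)/2 + 1 = ℓ/2 by omega]
    ring
end
end

section
/- Let p ≥ 3 be a prime, let t ∈ {1,…,p-2}, let N be a positive multiple of p·(p-1), and let s ∈ ℤ. Then the number Δ_{t,s}^N = |{(x_1,…,x_N) ∈ {0,…,t}^N \ {1,…,t}^N : x_1 + ⋯ + x_N ≡ s (mod p)}| is a multiple of p. -/
/-!
Split `Fin N` into `p` blocks of length `M = N / p`, a multiple of `p - 1`. Cyclically permuting
the blocks is an action of `ZMod p` preserving the counted set, so modulo `p` only the fixed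
tuples count: those repeating one block `b` `p` times. Their sum is `p • ∑ b`, so there are none
unless `p ∣ s`, and then `(t + 1) ^ M - t ^ M` of them, which is `0` mod `p` by Fermat since
`t` and `t + 1` are prime to `p`.
-/

open scoped Classical

section ShiftAction

attribute [local instance] arrowAction

theorem card_subtype_modEq_card_subtype_const {p : ℕ} [Fact p.Prime] {β : Type*} [Finite β]
    (P : (ZMod p → β) → Prop) (hP : ∀ x g, P x → P fun a => x (a + g)) :
    Nat.card {x // P x} ≡ Nat.card {b // P fun _ => b} [MOD p] := by
  have smul_eq (g : Multiplicative (ZMod p)) (x : ZMod p → β) :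
      g • x = fun a => x (a + -g.toAdd) :=
    funext fun a => congrArg x (add_comm _ _)
  let S : SubMulAction (Multiplicative (ZMod p)) (ZMod p → β) :=
    { carrier := {x | P x}
      smul_mem' := fun g x hx => by rw [Set.mem_ofPred_eq, smul_eq]; exact hP x _ hx }
  have const_of_fixed (x : MulAction.fixedPoints (Multiplicative (ZMod p)) S) (a : ZMod p) :
      x.1.1 a = x.1.1 0 := by
    simpa [smul_eq] using congrFun (congrArg Subtype.val (x.2 (.ofAdd (-a)))) 0
  let e : MulAction.fixedPoints (Multiplicative (ZMod p)) S ≃ {b // P fun _ => b} :=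
    { toFun x := ⟨x.1.1 0, by
        have hx : P x.1.1 := x.1.2
        rwa [funext (const_of_fixed x)] at hx⟩
      invFun b := ⟨⟨fun _ => b.1, b.2⟩, fun g => rfl⟩
      left_inv x := Subtype.ext <| Subtype.ext <| funext fun a => (const_of_fixed x a).symm
      right_inv b := rfl }
  have hG : IsPGroup p (Multiplicative (ZMod p)) :=
    IsPGroup.of_card (n := 1) (by simp [Nat.card_eq_fintype_card, ZMod.card])
  have h := hG.card_modEq_card_fixedPoints S
  rwa [Nat.card_congr e] at h

end ShiftAction

theorem card_exists_val_eq_zero (κ : Type*) [Fintype κ] (n : ℕ) :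
    Nat.card {b : κ → Fin (n + 1) // ∃ j, (b j : ℕ) = 0} =
      (n + 1) ^ Fintype.card κ - n ^ Fintype.card κ := by
  have card_forall : Nat.card {b : κ → Fin (n + 1) // ∀ j, (b j : ℕ) ≠ 0} =
      n ^ Fintype.card κ := by
    let e : {b : κ → Fin (n + 1) // ∀ j, (b j : ℕ) ≠ 0} ≃
        (κ → {c : Fin (n + 1) // (c : ℕ) ≠ 0}) :=
      @Equiv.subtypePiEquivPi κ (fun _ => Fin (n + 1)) fun _ c => (c : ℕ) ≠ 0
    rw [Nat.card_congr e]
    simp [Fin.val_eq_zero_iff]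
  have card_compl :=
    Fintype.card_subtype_compl fun b : κ → Fin (n + 1) => ∀ j, (b j : ℕ) ≠ 0
  simp only [Nat.card_eq_fintype_card, not_forall, not_not, Fintype.card_fun,
    Fintype.card_fin] at *
  rwa [card_forall] at card_compl

theorem dvd_pow_sub_pow_of_sub_one_dvd {p a b M : ℕ} (hp : p.Prime) (ha : ¬p ∣ a)
    (hb : ¬p ∣ b) (hM : p - 1 ∣ M) : p ∣ a ^ M - b ^ M := by
  obtain ⟨k, rfl⟩ := hM
  have fermat (c : ℕ) (hc : ¬p ∣ c) : c ^ ((p - 1) * k) ≡ 1 [MOD p] := by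
    have h := Nat.ModEq.pow_totient (Nat.Coprime.symm ((hp.coprime_iff_not_dvd).mpr hc))
    rw [Nat.totient_prime hp] at h
    simpa [pow_mul] using h.pow k
  exact Nat.dvd_of_mod_eq_zero <|
    Nat.sub_mod_eq_zero_of_mod_eq ((fermat a ha).trans (fermat b hb).symm)

def HasZeroEntryAndSumModEq (p : ℕ) (s : ℤ) {ι : Type*} [Fintype ι] {t : ℕ}
    (x : ι → Fin (t + 1)) : Prop :=
  (∃ i, (x i : ℕ) = 0) ∧ Int.ModEq (p : ℤ) (∑ i, ((x i : ℕ) : ℤ)) s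

section HasZeroEntryAndSumModEq

variable {p : ℕ} {s : ℤ} {t : ℕ} {ι κ : Type*} [Fintype ι] [Fintype κ]

theorem hasZeroEntryAndSumModEq_comp_equiv (e : κ ≃ ι) (x : ι → Fin (t + 1)) :
    HasZeroEntryAndSumModEq p s (x ∘ e) ↔ HasZeroEntryAndSumModEq p s x := by
  simp only [HasZeroEntryAndSumModEq, Function.comp_apply,
    Equiv.sum_comp e fun i => ((x i : ℕ) : ℤ)]
  exact and_congr_left' (e.surjective.exists (p := fun i => (x i : ℕ) = 0)).symm

theorem card_hasZeroEntryAndSumModEq_congr (e : ι ≃ κ) :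
    Nat.card {x : ι → Fin (t + 1) // HasZeroEntryAndSumModEq p s x} =
      Nat.card {x : κ → Fin (t + 1) // HasZeroEntryAndSumModEq p s x} :=
  Nat.card_congr <| (e.arrowCongr (Equiv.refl _)).subtypeEquiv fun x =>
    (hasZeroEntryAndSumModEq_comp_equiv e.symm x).symm

theorem hasZeroEntryAndSumModEq_snd_iff [NeZero p] (b : κ → Fin (t + 1)) :
    HasZeroEntryAndSumModEq p s (fun i : ZMod p × κ => b i.2) ↔
      (∃ j, (b j : ℕ) = 0) ∧ (p : ℤ) ∣ s := by
  have sum_eq : ∑ i : ZMod p × κ, ((b i.2 : ℕ) : ℤ) = p * ∑ j, ((b j : ℕ) : ℤ) := by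
    simp [Fintype.sum_prod_type, ZMod.card]
  simp only [HasZeroEntryAndSumModEq, sum_eq, Prod.exists, exists_const, Int.modEq_iff_dvd,
    dvd_sub_left (dvd_mul_right _ _)]

theorem card_hasZeroEntryAndSumModEq_prod_modEq [Fact p.Prime] :
    Nat.card {x : ZMod p × κ → Fin (t + 1) // HasZeroEntryAndSumModEq p s x} ≡
      Nat.card {b : κ → Fin (t + 1) //
        HasZeroEntryAndSumModEq p s fun i : ZMod p × κ => b i.2} [MOD p] := by
  let curry : {x : ZMod p × κ → Fin (t + 1) // HasZeroEntryAndSumModEq p s x} ≃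
      {y // HasZeroEntryAndSumModEq p s (Function.uncurry y)} :=
    (Equiv.curry _ _ _).subtypeEquiv fun x => by simp
  rw [Nat.card_congr curry]
  refine card_subtype_modEq_card_subtype_const _ fun y g hy => ?_
  exact (hasZeroEntryAndSumModEq_comp_equiv ((Equiv.addRight g).prodCongr (Equiv.refl κ)) _).2 hy

end HasZeroEntryAndSumModEq

theorem stmt14_general (p : ℕ) (hp : p.Prime)
    (t : ℕ) (ht1 : 1 ≤ t) (ht2 : t ≤ p - 2)
    (N : ℕ) (hdvd : p * (p - 1) ∣ N) (s : ℤ) :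
    p ∣ (Finset.univ.filter fun x : Fin N → Fin (t + 1) =>
      (∃ i, (x i : ℕ) = 0) ∧ Int.ModEq (p : ℤ) (∑ i, ((x i : ℕ) : ℤ)) s).card := by
  have := Fact.mk hp
  obtain ⟨k, rfl⟩ := hdvd
  let e : Fin (p * (p - 1) * k) ≃ ZMod p × Fin ((p - 1) * k) :=
    (finCongr (mul_assoc _ _ _)).trans <|
      finProdFinEquiv.symm.trans <| (ZMod.finEquiv p).toEquiv.prodCongr (Equiv.refl _)
  rw [← Fintype.card_subtype, ← Nat.card_eq_fintype_card]
  change p ∣ Nat.card {x // HasZeroEntryAndSumModEq p s x}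
  rw [card_hasZeroEntryAndSumModEq_congr e]
  refine Nat.modEq_zero_iff_dvd.mp <| card_hasZeroEntryAndSumModEq_prod_modEq.trans <|
    Nat.modEq_zero_iff_dvd.mpr ?_
  simp only [hasZeroEntryAndSumModEq_snd_iff]
  by_cases hs : (p : ℤ) ∣ s
  · simp only [hs, and_true, card_exists_val_eq_zero, Fintype.card_fin]
    exact dvd_pow_sub_pow_of_sub_one_dvd hp (Nat.not_dvd_of_pos_of_lt (by omega) (by omega))
      (Nat.not_dvd_of_pos_of_lt (by omega) (by omega)) (dvd_mul_right _ _)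
  · simp [hs]

theorem stmt14 (p : ℕ) (hp : p.Prime) (hp3 : 3 ≤ p)
    (t : ℕ) (ht1 : 1 ≤ t) (ht2 : t ≤ p - 2)
    (N : ℕ) (hN : 0 < N) (hdvd : p * (p - 1) ∣ N) (s : ℤ) :
    p ∣ (Finset.univ.filter fun x : Fin N → Fin (t + 1) =>
      (∃ i, (x i : ℕ) = 0) ∧ Int.ModEq (p : ℤ) (∑ i, ((x i : ℕ) : ℤ)) s).card :=
  stmt14_general p hp t ht1 ht2 N hdvd s
end

section
/- For every prime p ≥ 3 and every perfect square n = N^2 with N ≡ 0 (mod p(p-1)), there exist p induced subgraphs G_0, G_1, …, G_{p-1} of the Hamming graph H(n,p) whose vertex sets partition the vertex set of H(n,p), such that Σ_{k=0}^{p-1} |ρ(V(G_k))|·ε^k ≠ 0 and (p-1)·n − min{δ(G_0), δ(G_1), …, δ(G_{p-1})} = (p-1)·√n. -/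
open scoped Classical

noncomputable section

/-- The rotation `ρ` applied to the part `V k` of a partition of `U_m^n` (in exponent
coordinates): `x ∈ ρ(V)_k` iff `x ∈ C_{ε^j} ∩ V_{ε^{k-j}}` for some `j`, where
`C_{ε^j}` consists of the vertices whose entries multiply to `ε^j`, i.e. whose exponents
sum to `j`. -/
def rho (m n : ℕ) [NeZero m] (V : ZMod m → Finset (Fin n → ZMod m)) (k : ZMod m) :
    Finset (Fin n → ZMod m) :=
  Finset.univ.filter fun x => x ∈ V (k - ∑ i, x i)

/-!
Read a vertex of `H(N², p)` as an `N × N` matrix over `ZMod p`, let `A` be the set of matrices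
with a zero row, and take `V₀ = A`, `V₁ = Aᶜ`, all other parts empty.

A matrix in `A` with zero row `j` keeps in `A` all its `(N² - N)(p - 1)` neighbours that differ
outside row `j`; the matrix with zero row `j` and all other entries `1` has no further ones. A
matrix outside `A` has at most one neighbour in `A` per row, hence degree at least
`N²(p - 1) - N ≥ (N² - N)(p - 1)` in `Aᶜ`. So `min δ = (N² - N)(p - 1)`.

With the additive character `ψ k = ε^k` and `x ∈ V_{k(x)}`, the weighted sum of the `|ρ(V_k)|`
is `Σ_x ψ(k(x) + Σ_i x_i) = (ε - 1) Σ_{x ∉ A} ψ(Σ_i x_i)`, because the full character sum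
vanishes; the last sum factorises over the rows as `(Σ_{r ≠ 0} ψ(Σ_i r_i))^N = (-1)^N`.
-/

open Finset Function

section HammingNeighbours

variable {ι α : Type*} [DecidableEq ι]

theorem hammingDist_update_eq_one [Fintype ι] [DecidableEq α] {x : ι → α} {c : ι} {a : α}
    (ha : a ≠ x c) : hammingDist x (update x c a) = 1 := by
  rw [hammingDist, card_eq_one]
  refine ⟨c, ?_⟩
  ext i
  rcases eq_or_ne i c with rfl | hic
  · simpa using ha.symm
  · simp [hic]

theorem exists_update_of_hammingDist_eq_one [Fintype ι] [DecidableEq α] {x y : ι → α}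
    (h : hammingDist x y = 1) : ∃ c a, a ≠ x c ∧ update x c a = y := by
  obtain ⟨c, hc⟩ := card_eq_one.mp h
  have hdiff : ∀ i, x i ≠ y i ↔ i = c := fun i => by
    simpa using congrArg (i ∈ ·) hc
  refine ⟨c, y c, fun h => (hdiff c).2 rfl h.symm, funext fun i => ?_⟩
  rcases eq_or_ne i c with rfl | hic
  · simp
  · simpa [hic] using not_not.mp (mt (hdiff i).1 hic)

theorem update_injOn_ne (x : ι → α) :
    Set.InjOn (fun q : ι × α => update x q.1 q.2) {q | q.2 ≠ x q.1} := by
  rintro ⟨c, a⟩ (ha : a ≠ x c) ⟨c', a'⟩ - h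
  have hc : c = c' := by
    by_contra hcc
    exact ha (by simpa [hcc] using congrFun h c)
  subst hc
  simpa using congrFun h c

variable [Fintype ι] [Fintype α] [DecidableEq α]

theorem indDeg_eq_card_update (V : Finset (ι → α)) (x : ι → α) :
    indDeg V x = #{q : ι × α | q.2 ≠ x q.1 ∧ update x q.1 q.2 ∈ V} := by
  have hdist : indDeg V x = #{w ∈ V | hammingDist x w = 1} := by
    rw [indDeg]
    congr!
  rw [hdist, eq_comm]
  refine card_nbij (fun q => update x q.1 q.2) (fun q hq => ?_)
    ((update_injOn_ne x).mono fun q hq => by simp_all) fun y hy => ?_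
  · simp only [mem_coe, mem_filter, mem_univ, true_and] at hq ⊢
    exact ⟨hq.2, hammingDist_update_eq_one hq.1⟩
  · simp only [mem_coe, mem_filter] at hy
    obtain ⟨c, a, ha, rfl⟩ := exists_update_of_hammingDist_eq_one hy.2
    exact ⟨(c, a), by simp [ha, hy.1], rfl⟩

theorem card_filter_mem_ne_apply (x : ι → α) (S : Finset ι) :
    #{q : ι × α | q.1 ∈ S ∧ q.2 ≠ x q.1} = #S * (Fintype.card α - 1) := by
  have hrow : ∀ c ∈ S, ∑ a : α, (if c ∈ S ∧ a ≠ x c then 1 else 0) = Fintype.card α - 1 :=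
    fun c hc => by
      rw [← card_univ, ← card_erase_of_mem (mem_univ (x c)), ← filter_ne', card_filter]
      simp [hc]
  rw [card_filter, Fintype.sum_prod_type, ← sum_subset (subset_univ S) fun c _ hc => by simp [hc],
    sum_congr rfl hrow, sum_const, smul_eq_mul]

theorem card_mul_le_indDeg {V : Finset (ι → α)} {x : ι → α} {S : Finset ι}
    (h : ∀ c ∈ S, ∀ a, update x c a ∈ V) : #S * (Fintype.card α - 1) ≤ indDeg V x := by
  rw [← card_filter_mem_ne_apply x, indDeg_eq_card_update]
  exact card_le_card fun q hq => by
    simp only [mem_filter, mem_univ, true_and] at hq ⊢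
    exact ⟨hq.2, h _ hq.1 _⟩

theorem indDeg_le_card_mul {V : Finset (ι → α)} {x : ι → α} {S : Finset ι}
    (h : ∀ c a, a ≠ x c → update x c a ∈ V → c ∈ S) :
    indDeg V x ≤ #S * (Fintype.card α - 1) := by
  rw [← card_filter_mem_ne_apply x, indDeg_eq_card_update]
  exact card_le_card fun q hq => by
    simp only [mem_filter, mem_univ, true_and] at hq ⊢
    exact ⟨h _ _ hq.1 hq.2, hq.1⟩

theorem indDeg_univ (x : ι → α) : indDeg univ x = Fintype.card ι * (Fintype.card α - 1) :=
  le_antisymm (by simpa using indDeg_le_card_mul (V := univ) (x := x) (S := univ) (by simp))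
    (by simpa using card_mul_le_indDeg (V := univ) (x := x) (S := univ) (by simp))

theorem indDeg_add_indDeg_compl (V : Finset (ι → α)) (x : ι → α) :
    indDeg V x + indDeg Vᶜ x = indDeg univ x := by
  simp only [indDeg_eq_card_update, mem_compl, mem_univ, and_true, ← filter_filter]
  exact card_filter_add_card_filter_not _

end HammingNeighbours

section ZeroRow

variable {R C ι α : Type*} [Fintype R] [Fintype C] [Fintype ι]

theorem card_filter_row_ne (e : R × C ≃ ι) (j : R) :
    #{c : ι | (e.symm c).1 ≠ j} = (Fintype.card R - 1) * Fintype.card C := by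
  rw [card_equiv e.symm (t := ({j}ᶜ : Finset R) ×ˢ univ) (by simp), card_product, card_compl,
    card_singleton, card_univ]

variable [Fintype α] [DecidableEq α] [Zero α]

def zeroRowSet (e : R × C ≃ ι) : Finset (ι → α) :=
  {x | ∃ j, ∀ i, x (e (j, i)) = 0}

variable {e : R × C ≃ ι}

theorem mem_zeroRowSet {x : ι → α} : x ∈ zeroRowSet e ↔ ∃ j, ∀ i, x (e (j, i)) = 0 := by
  simp [zeroRowSet]

variable [DecidableEq ι]

theorem le_indDeg_zeroRowSet {x : ι → α} (hx : x ∈ zeroRowSet e) :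
    (Fintype.card R - 1) * Fintype.card C * (Fintype.card α - 1) ≤ indDeg (zeroRowSet e) x := by
  obtain ⟨j, hj⟩ := mem_zeroRowSet.mp hx
  rw [← card_filter_row_ne e j]
  refine card_mul_le_indDeg fun c hc a => mem_zeroRowSet.mpr ⟨j, fun i => ?_⟩
  have : e (j, i) ≠ c := by
    rintro rfl
    simp at hc
  rw [update_of_ne this, hj]

/-- Changing an entry of row `j` leaves `zeroRowSet e`, as no other row contains a zero. -/
theorem indDeg_zeroRowSet_le [Nonempty C] (j : R) {a : α} (ha : a ≠ 0) :
    indDeg (zeroRowSet e) (fun c => if (e.symm c).1 = j then 0 else a) ≤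
      (Fintype.card R - 1) * Fintype.card C * (Fintype.card α - 1) := by
  rw [← card_filter_row_ne e j]
  refine indDeg_le_card_mul fun c b hb hmem => ?_
  simp only [mem_filter, mem_univ, true_and]
  intro hcj
  obtain ⟨j', hj'⟩ := mem_zeroRowSet.mp hmem
  rcases eq_or_ne j' j with rfl | hj'j
  · have hc : e (j', (e.symm c).2) = c := by rw [← hcj]; simp
    exact hb (by simpa [hc, hcj] using hj' (e.symm c).2)
  · obtain ⟨i⟩ := ‹Nonempty C›
    have : e (j', i) ≠ c := by
      rintro rfl
      simp at hcj
      exact hj'j hcj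
    exact ha (by simpa [update_of_ne this, hj'j] using hj' i)

theorem minDeg_zeroRowSet [Nonempty R] [Nonempty C] [Nontrivial α] :
    minDeg (zeroRowSet e : Finset (ι → α)) =
      ((Fintype.card R - 1) * Fintype.card C * (Fintype.card α - 1) : ℕ) := by
  obtain ⟨j⟩ := ‹Nonempty R›
  obtain ⟨a, ha⟩ := exists_ne (0 : α)
  have hmem : (fun c => if (e.symm c).1 = j then 0 else a) ∈ zeroRowSet e :=
    mem_zeroRowSet.mpr ⟨j, fun i => by simp⟩
  refine le_antisymm ((Finset.inf_le hmem).trans ?_)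
    (Finset.le_inf fun x hx => by exact_mod_cast le_indDeg_zeroRowSet hx)
  exact_mod_cast indDeg_zeroRowSet_le j ha

theorem row_eq_of_update_mem_zeroRowSet {x : ι → α} (hx : x ∉ zeroRowSet e) {c : ι} {a : α}
    {j : R} (hj : ∀ i, update x c a (e (j, i)) = 0) : (e.symm c).1 = j := by
  by_contra hcj
  refine hx (mem_zeroRowSet.mpr ⟨j, fun i => ?_⟩)
  have : e (j, i) ≠ c := by
    rintro rfl
    simp at hcj
  simpa [update_of_ne this] using hj i

/-- A neighbour in `zeroRowSet e` arises by clearing the only nonzero entry of some row, so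
there is at most one per row. -/
theorem indDeg_zeroRowSet_le_card_of_notMem {x : ι → α} (hx : x ∉ zeroRowSet e) :
    indDeg (zeroRowSet e) x ≤ Fintype.card R := by
  rw [indDeg_eq_card_update, ← card_univ]
  refine card_le_card_of_injOn (fun q => (e.symm q.1).1) (fun _ _ => mem_coe.mpr (mem_univ _)) ?_
  rintro ⟨c, a⟩ hq ⟨c', a'⟩ hq' (hrow : (e.symm c).1 = (e.symm c').1)
  simp only [coe_filter, Set.mem_ofPred_eq, mem_univ, true_and, mem_zeroRowSet] at hq hq'
  obtain ⟨ha, j, hj⟩ := hq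
  obtain ⟨ha', j', hj'⟩ := hq'
  obtain rfl := row_eq_of_update_mem_zeroRowSet hx hj
  obtain rfl := row_eq_of_update_mem_zeroRowSet hx hj'
  have h0 : a = 0 := by simpa using hj (e.symm c).2
  have h0' : a' = 0 := by simpa using hj' (e.symm c').2
  obtain rfl : c = c' := by
    by_contra hne
    refine ha (h0.trans ?_)
    simpa [← hrow, update_of_ne hne] using (hj' (e.symm c).2).symm
  rw [h0, h0']

theorem le_indDeg_compl_zeroRowSet (hRC : Fintype.card R ≤ Fintype.card C * (Fintype.card α - 1))
    {x : ι → α} (hx : x ∉ zeroRowSet e) :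
    (Fintype.card R - 1) * Fintype.card C * (Fintype.card α - 1) ≤ indDeg (zeroRowSet e)ᶜ x := by
  have hsplit := indDeg_add_indDeg_compl (zeroRowSet e) x
  have hcross := indDeg_zeroRowSet_le_card_of_notMem hx
  rw [indDeg_univ, Fintype.card_congr e.symm, Fintype.card_prod] at hsplit
  rw [mul_assoc] at hsplit ⊢
  rw [Nat.sub_one_mul]
  omega

theorem minDeg_zeroRowSet_le_minDeg_compl [Nonempty R] [Nonempty C] [Nontrivial α]
    (hRC : Fintype.card R ≤ Fintype.card C * (Fintype.card α - 1)) :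
    minDeg (zeroRowSet e : Finset (ι → α)) ≤ minDeg (zeroRowSet e : Finset (ι → α))ᶜ := by
  rw [minDeg_zeroRowSet]
  exact Finset.le_inf fun x hx => by
    exact_mod_cast le_indDeg_compl_zeroRowSet hRC (mem_compl.mp hx)

end ZeroRow

theorem AddChar.map_sum_eq_prod {ι α M : Type*} [AddCommMonoid α] [CommMonoid M]
    (ψ : AddChar α M) (s : Finset ι) (f : ι → α) : ψ (∑ i ∈ s, f i) = ∏ i ∈ s, ψ (f i) := by
  induction s using Finset.cons_induction with
  | empty => simp
  | cons a s ha ih => rw [sum_cons, prod_cons, AddChar.map_add_eq_mul, ih]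

section CharacterSums

variable {ι α M : Type*} [Fintype ι] [DecidableEq ι] [AddCommGroup α] [Fintype α] [CommRing M]
  [IsDomain M] {ψ : AddChar α M}

theorem sum_addChar_sum_eq_zero [Nonempty ι] (hψ : ψ ≠ 1) :
    ∑ x : ι → α, ψ (∑ i, x i) = 0 := by
  simp_rw [AddChar.map_sum_eq_prod, ← Fintype.prod_sum]
  exact prod_eq_zero (mem_univ (Classical.arbitrary ι)) (AddChar.sum_eq_zero_of_ne_one hψ)

variable [DecidableEq α]

theorem sum_filter_ne_zero_addChar_sum [Nonempty ι] (hψ : ψ ≠ 1) :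
    ∑ x : ι → α with x ≠ 0, ψ (∑ i, x i) = -1 := by
  rw [filter_ne', sum_erase_eq_sub (mem_univ 0), sum_addChar_sum_eq_zero hψ]
  simp

theorem sum_addChar_ite_add_sum [Nonempty ι] (hψ : ψ ≠ 1) (A : Finset (ι → α)) (b : α) :
    ∑ x : ι → α, ψ ((if x ∈ A then 0 else b) + ∑ i, x i) =
      (ψ b - 1) * ∑ x ∈ Aᶜ, ψ (∑ i, x i) := by
  have hsplit : ∀ x : ι → α, ψ ((if x ∈ A then 0 else b) + ∑ i, x i) =
      ψ (∑ i, x i) + if x ∈ Aᶜ then (ψ b - 1) * ψ (∑ i, x i) else 0 := by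
    intro x
    by_cases hx : x ∈ A
    · simp [hx]
    · simp [hx, AddChar.map_add_eq_mul]
      ring
  rw [sum_congr rfl fun x _ => hsplit x, sum_add_distrib, sum_addChar_sum_eq_zero hψ, zero_add,
    sum_ite_mem, univ_inter, mul_sum]

variable {R C : Type*} [Fintype R] [Fintype C]

/-- The sum over the matrices without zero row factorises over the rows. -/
theorem sum_compl_zeroRowSet_addChar_sum [Nonempty C] (e : R × C ≃ ι) (hψ : ψ ≠ 1) :
    ∑ x ∈ (zeroRowSet e)ᶜ, ψ (∑ c, x c) = (-1) ^ Fintype.card R := by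
  let Φ : (R → C → α) ≃ (ι → α) := (Equiv.curry R C α).symm.trans (e.arrowCongr (Equiv.refl α))
  have hΦ : ∀ g j i, Φ g (e (j, i)) = g j i := fun g j i => by simp [Φ]
  have hrow : ∀ g, (if Φ g ∈ (zeroRowSet e)ᶜ then ψ (∑ c, Φ g c) else 0) =
      ∏ j, if g j ≠ 0 then ψ (∑ i, g j i) else 0 := by
    intro g
    rw [prod_ite_zero, ← AddChar.map_sum_eq_prod, ← e.sum_comp, Fintype.sum_prod_type]
    simp [mem_zeroRowSet, hΦ, funext_iff]
  calc ∑ x ∈ (zeroRowSet e)ᶜ, ψ (∑ c, x c)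
      = ∑ x, if x ∈ (zeroRowSet e)ᶜ then ψ (∑ c, x c) else 0 := by rw [sum_ite_mem, univ_inter]
    _ = ∑ g : R → C → α, ∏ j, if g j ≠ 0 then ψ (∑ i, g j i) else 0 := by
      rw [← Φ.sum_comp]
      exact sum_congr rfl fun g _ => hrow g
    _ = ∏ _j : R, ∑ r : C → α, if r ≠ 0 then ψ (∑ i, r i) else 0 := by
      rw [Fintype.prod_sum]
    _ = (-1) ^ Fintype.card R := by
      simp_rw [← sum_filter, sum_filter_ne_zero_addChar_sum hψ, prod_const, card_univ]

end CharacterSums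


theorem sum_card_rho_fiber_mul_addChar {m n : ℕ} [NeZero m] {M : Type*} [CommSemiring M]
    (ψ : AddChar (ZMod m) M) (f : (Fin n → ZMod m) → ZMod m) :
    ∑ k, (#(rho m n (fun k => {x | f x = k}) k) : M) * ψ k = ∑ x, ψ (f x + ∑ i, x i) := by
  calc ∑ k, (#(rho m n (fun k => {x | f x = k}) k) : M) * ψ k
      = ∑ k, ∑ x, if f x + ∑ i, x i = k then ψ k else 0 := by
        refine sum_congr rfl fun k _ => ?_
        rw [rho, card_filter, Nat.cast_sum, sum_mul]
        simp [eq_sub_iff_add_eq]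
    _ = ∑ x, ψ (f x + ∑ i, x i) := by
        rw [sum_comm]
        simp

theorem inf_minDeg_fiber_ite {ι α κ : Type*} [Fintype ι] [DecidableEq ι] [Fintype α]
    [DecidableEq α] [Fintype κ] [DecidableEq κ] (A : Finset (ι → α)) {a b : κ} (hab : a ≠ b) :
    univ.inf (fun k => minDeg {x | (if x ∈ A then a else b) = k}) = minDeg A ⊓ minDeg Aᶜ := by
  have hA : ({x | (if x ∈ A then a else b) = a} : Finset (ι → α)) = A := by
    ext x; by_cases hx : x ∈ A <;> simp [hx, hab.symm]
  have hB : ({x | (if x ∈ A then a else b) = b} : Finset (ι → α)) = Aᶜ := by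
    ext x; by_cases hx : x ∈ A <;> simp [hx, hab]
  refine le_antisymm (le_inf ?_ ?_) (Finset.le_inf fun k _ => ?_)
  · exact (Finset.inf_le (mem_univ a)).trans_eq (congrArg minDeg hA)
  · exact (Finset.inf_le (mem_univ b)).trans_eq (congrArg minDeg hB)
  · by_cases hka : k = a
    · subst hka; rw [hA]; exact inf_le_left
    by_cases hkb : k = b
    · subst hkb; rw [hB]; exact inf_le_right
    have : ({x | (if x ∈ A then a else b) = k} : Finset (ι → α)) = ∅ := by
      ext x; by_cases hx : x ∈ A <;> simp [hx, Ne.symm hka, Ne.symm hkb]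
    simp [this, minDeg]

theorem isPrimitiveRoot_primRoot (m : ℕ) [NeZero m] : IsPrimitiveRoot (primRoot m) m := by
  simpa [primRoot] using Complex.isPrimitiveRoot_exp m (NeZero.ne m)

theorem stmt15_general (p : ℕ) [NeZero p] (hp : p.Prime)
    (N : ℕ) (hN : 0 < N) :
    ∃ V : ZMod p → Finset (Fin (N ^ 2) → ZMod p),
      (∀ x : Fin (N ^ 2) → ZMod p, ∃! k : ZMod p, x ∈ V k) ∧
      (∑ k : ZMod p, ((rho p (N ^ 2) V k).card : ℂ) * primRoot p ^ k.val) ≠ 0 ∧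
      (((p - 1) * N ^ 2 : ℕ) : ℕ∞) -
          Finset.univ.inf (fun k : ZMod p => minDeg (V k)) =
        (((p - 1) * N : ℕ) : ℕ∞) := by
  have : Fact (1 < p) := ⟨hp.one_lt⟩
  have : NeZero N := ⟨hN.ne'⟩
  let e : Fin N × Fin N ≃ Fin (N ^ 2) := finProdFinEquiv.trans (finCongr (sq N).symm)
  set A : Finset (Fin (N ^ 2) → ZMod p) := zeroRowSet e
  have hε := isPrimitiveRoot_primRoot p
  obtain ⟨ψ, hψ_apply⟩ : ∃ ψ : AddChar (ZMod p) ℂ, ∀ k, ψ k = primRoot p ^ k.val :=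
    ⟨_, AddChar.zmodChar_apply hε.pow_eq_one⟩
  refine ⟨fun k => {x | (if x ∈ A then 0 else 1) = k}, fun x => ?_, ?_, ?_⟩
  · simp only [mem_filter, mem_univ, true_and]
    exact existsUnique_eq'
  · have hψ1 : ψ 1 = primRoot p := by rw [hψ_apply, ZMod.val_one, pow_one]
    have hψ : ψ ≠ 1 := AddChar.ne_one_iff.mpr ⟨1, hψ1 ▸ hε.ne_one hp.one_lt⟩
    simp_rw [← hψ_apply]
    rw [sum_card_rho_fiber_mul_addChar, sum_addChar_ite_add_sum hψ,
      sum_compl_zeroRowSet_addChar_sum e hψ, hψ1]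
    exact mul_ne_zero (sub_ne_zero.mpr (hε.ne_one hp.one_lt)) (pow_ne_zero _ (by norm_num))
  · have hRC : Fintype.card (Fin N) ≤ Fintype.card (Fin N) * (Fintype.card (ZMod p) - 1) := by
      simpa using Nat.le_mul_of_pos_right N (Nat.sub_pos_of_lt hp.one_lt)
    beta_reduce
    rw [inf_minDeg_fiber_ite A zero_ne_one, inf_eq_left.mpr (minDeg_zeroRowSet_le_minDeg_compl hRC),
      minDeg_zeroRowSet, ← ENat.natCast_sub]
    simp only [Fintype.card_fin, ZMod.card]
    have hsq : (N - 1) * N * (p - 1) + (p - 1) * N = (p - 1) * N ^ 2 := by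
      obtain ⟨M, rfl⟩ := Nat.exists_eq_add_one_of_ne_zero hN.ne'
      simp only [Nat.add_sub_cancel]
      ring
    rw [← hsq, Nat.add_sub_cancel_left]

theorem stmt15 (p : ℕ) [NeZero p] (hp : p.Prime) (hp3 : 3 ≤ p)
    (N : ℕ) (hN : 0 < N) (hdvd : p * (p - 1) ∣ N) :
    ∃ V : ZMod p → Finset (Fin (N ^ 2) → ZMod p),
      (∀ x : Fin (N ^ 2) → ZMod p, ∃! k : ZMod p, x ∈ V k) ∧
      (∑ k : ZMod p, ((rho p (N ^ 2) V k).card : ℂ) * primRoot p ^ k.val) ≠ 0 ∧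
      (((p - 1) * N ^ 2 : ℕ) : ℕ∞) -
          Finset.univ.inf (fun k : ZMod p => minDeg (V k)) =
        (((p - 1) * N : ℕ) : ℕ∞) :=
  stmt15_general p hp N hN
end
end
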